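/- arXiv:2404.10398 — 7 statements merged into one kernel-verified Lean document; each statement's English description precedes it below -/
import Mathlib

section
/- Let n ≥ 1 and β > 0, and let H_{kl} ∈ ℝ^{n×n} (k,l ∈ {1,2,3,4}) satisfy H_{kl}ᵀ = H_{lk} and the monotonicity condition (so that H₃₃ and H₄₄ are negative definite and hence invertible). Then the symmetric matrices −H₁₁ + H₁₃H₃₃⁻¹H₃₁ + H₁₄H₄₄⁻¹H₄₁ and H₂₂ − H₂₃H₃₃⁻¹H₃₂ − H₂₄H₄₄⁻¹H₄₂ are both negative definite. -/
/-!
Testing the monotonicity inequality at `(0, 0, z, 0)` and `(0, 0, 0, θ)` shows that `H₃₃` and `H₄₄`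
are negative definite, hence invertible. At `(x, 0, -H₃₃⁻¹H₃₁x, -H₄₄⁻¹H₄₁x)` the `z`- and `θ`-rows
of the form vanish, and what is left is minus the quadratic form of
`H₁₁ - H₁₃H₃₃⁻¹H₃₁ - H₁₄H₄₄⁻¹H₄₁` at `x`, bounded by `-β|x|²`. The point
`(0, y, -H₃₃⁻¹H₃₂y, -H₄₄⁻¹H₄₂y)` treats the second Schur complement in the same way.
-/

open Matrix

namespace Matrix

variable {ι κ R : Type*} [Fintype ι] [DecidableEq ι] [CommRing R]

theorem mulVec_add_mulVec_neg_inv_mul_mulVec [Fintype κ] {D : Matrix ι ι R} (hD : IsUnit D.det)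
    (C : Matrix ι κ R) (x : κ → R) : C *ᵥ x + D *ᵥ (-(D⁻¹ * C) *ᵥ x) = 0 := by
  rw [neg_mulVec, mulVec_neg, mulVec_mulVec, ← Matrix.mul_assoc, mul_nonsing_inv _ hD,
    Matrix.one_mul, add_neg_cancel]

theorem sub_mul_inv_mul_mulVec [Fintype κ] (A : Matrix κ κ R) (B : Matrix κ ι R) (D : Matrix ι ι R)
    (C : Matrix ι κ R) (x : κ → R) :
    (A - B * D⁻¹ * C) *ᵥ x = A *ᵥ x + B *ᵥ (-(D⁻¹ * C) *ᵥ x) := by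
  rw [sub_mulVec, neg_mulVec, mulVec_neg, mulVec_mulVec, Matrix.mul_assoc, sub_eq_add_neg]

theorem isSymm_mul_inv_mul {D : Matrix ι ι R} (hD : D.IsSymm) {B : Matrix κ ι R}
    {C : Matrix ι κ R} (hBC : Bᵀ = C) : (B * D⁻¹ * C).IsSymm := by
  rw [IsSymm, transpose_mul, transpose_mul, transpose_nonsing_inv, hD.eq, ← hBC,
    transpose_transpose, Matrix.mul_assoc]

omit [DecidableEq ι] in
theorem posDef_neg_of_mulVec_dotProduct_le {A : Matrix ι ι ℝ} (hA : A.IsSymm) {β : ℝ}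
    (hβ : 0 < β) (h : ∀ v, A *ᵥ v ⬝ᵥ v ≤ -β * (v ⬝ᵥ v)) : (-A).PosDef := by
  refine .of_dotProduct_mulVec_pos (by simpa using hA) fun v hv => ?_
  have hvv : 0 < v ⬝ᵥ v := by simpa using dotProduct_star_self_pos_iff.mpr hv
  have := h v
  rw [star_trivial, neg_mulVec, dotProduct_neg, dotProduct_comm]
  nlinarith

end Matrix

theorem stmt_1_general (n : ℕ) (β : ℝ) (hβ : 0 < β)
    (H11 H12 H13 H14 H21 H22 H23 H24 H31 H32 H33 H41 H42 H44 :
      Matrix (Fin n) (Fin n) ℝ)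
    (hsym11 : H11ᵀ = H11) (hsym13 : H13ᵀ = H31)
    (hsym14 : H14ᵀ = H41) (hsym22 : H22ᵀ = H22) (hsym23 : H23ᵀ = H32)
    (hsym24 : H24ᵀ = H42) (hsym33 : H33ᵀ = H33) (hsym44 : H44ᵀ = H44)
    (hmono : ∀ x y z θ : Fin n → ℝ,
      -((H11.mulVec x + H12.mulVec y + H13.mulVec z + H14.mulVec θ) ⬝ᵥ x)
        + (H21.mulVec x + H22.mulVec y + H23.mulVec z + H24.mulVec θ) ⬝ᵥ y
        + (H31.mulVec x + H32.mulVec y + H33.mulVec z) ⬝ᵥ z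
        + (H41.mulVec x + H42.mulVec y + H44.mulVec θ) ⬝ᵥ θ
        ≤ -β * (x ⬝ᵥ x + y ⬝ᵥ y + z ⬝ᵥ z + θ ⬝ᵥ θ)) :
    (-(-H11 + H13 * H33⁻¹ * H31 + H14 * H44⁻¹ * H41)).PosDef ∧
      (-(H22 - H23 * H33⁻¹ * H32 - H24 * H44⁻¹ * H42)).PosDef := by
  have h33 : (-H33).PosDef := posDef_neg_of_mulVec_dotProduct_le hsym33 hβ fun z => by
    simpa using hmono 0 0 z 0
  have h44 : (-H44).PosDef := posDef_neg_of_mulVec_dotProduct_le hsym44 hβ fun θ => by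
    simpa using hmono 0 0 0 θ
  have hu33 : IsUnit H33.det := by simpa using h33.isUnit.neg.map detMonoidHom
  have hu44 : IsUnit H44.det := by simpa using h44.isUnit.neg.map detMonoidHom
  have weaken : ∀ a b c : Fin n → ℝ,
      -β * (a ⬝ᵥ a + b ⬝ᵥ b + c ⬝ᵥ c) ≤ -β * (a ⬝ᵥ a) := fun a b c => by
    have hb : 0 ≤ b ⬝ᵥ b := by simpa using dotProduct_star_self_nonneg b
    have hc : 0 ≤ c ⬝ᵥ c := by simpa using dotProduct_star_self_nonneg c
    nlinarith
  constructor
  · refine posDef_neg_of_mulVec_dotProduct_le (((IsSymm.neg hsym11).add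
      (isSymm_mul_inv_mul hsym33 hsym13)).add (isSymm_mul_inv_mul hsym44 hsym14)) hβ fun x => ?_
    have h := hmono x 0 (-(H33⁻¹ * H31) *ᵥ x) (-(H44⁻¹ * H41) *ᵥ x)
    simp only [mulVec_zero, add_zero, mulVec_add_mulVec_neg_inv_mul_mulVec hu33,
      mulVec_add_mulVec_neg_inv_mul_mulVec hu44, zero_dotProduct, dotProduct_zero] at h
    rw [show -H11 + H13 * H33⁻¹ * H31 + H14 * H44⁻¹ * H41
        = -(H11 - H13 * H33⁻¹ * H31 - H14 * H44⁻¹ * H41) by abel,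
      neg_mulVec, neg_dotProduct, sub_mul_inv_mul_mulVec, sub_mul_inv_mul_mulVec]
    exact h.trans (weaken _ _ _)
  · refine posDef_neg_of_mulVec_dotProduct_le ((IsSymm.sub hsym22
      (isSymm_mul_inv_mul hsym33 hsym23)).sub (isSymm_mul_inv_mul hsym44 hsym24)) hβ fun y => ?_
    have h := hmono 0 y (-(H33⁻¹ * H32) *ᵥ y) (-(H44⁻¹ * H42) *ᵥ y)
    simp only [mulVec_zero, zero_add, add_zero, mulVec_add_mulVec_neg_inv_mul_mulVec hu33,
      mulVec_add_mulVec_neg_inv_mul_mulVec hu44, zero_dotProduct, dotProduct_zero, neg_zero] at h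
    rw [sub_mul_inv_mul_mulVec, sub_mul_inv_mul_mulVec]
    exact h.trans (weaken _ _ _)

/-- Under the monotonicity condition, the symmetric matrices
`−H₁₁ + H₁₃H₃₃⁻¹H₃₁ + H₁₄H₄₄⁻¹H₄₁` and `H₂₂ − H₂₃H₃₃⁻¹H₃₂ − H₂₄H₄₄⁻¹H₄₂`
are both negative definite. -/
theorem stmt_1 (n : ℕ) (hn : 1 ≤ n) (β : ℝ) (hβ : 0 < β)
    (H11 H12 H13 H14 H21 H22 H23 H24 H31 H32 H33 H41 H42 H44 :
      Matrix (Fin n) (Fin n) ℝ)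
    (hsym11 : H11ᵀ = H11) (hsym12 : H12ᵀ = H21) (hsym13 : H13ᵀ = H31)
    (hsym14 : H14ᵀ = H41) (hsym22 : H22ᵀ = H22) (hsym23 : H23ᵀ = H32)
    (hsym24 : H24ᵀ = H42) (hsym33 : H33ᵀ = H33) (hsym44 : H44ᵀ = H44)
    (hmono : ∀ x y z θ : Fin n → ℝ,
      -((H11.mulVec x + H12.mulVec y + H13.mulVec z + H14.mulVec θ) ⬝ᵥ x)
        + (H21.mulVec x + H22.mulVec y + H23.mulVec z + H24.mulVec θ) ⬝ᵥ y
        + (H31.mulVec x + H32.mulVec y + H33.mulVec z) ⬝ᵥ z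
        + (H41.mulVec x + H42.mulVec y + H44.mulVec θ) ⬝ᵥ θ
        ≤ -β * (x ⬝ᵥ x + y ⬝ᵥ y + z ⬝ᵥ z + θ ⬝ᵥ θ)) :
    (-(-H11 + H13 * H33⁻¹ * H31 + H14 * H44⁻¹ * H41)).PosDef ∧
      (-(H22 - H23 * H33⁻¹ * H32 - H24 * H44⁻¹ * H42)).PosDef :=
  stmt_1_general n β hβ H11 H12 H13 H14 H21 H22 H23 H24 H31 H32 H33 H41 H42 H44 hsym11 hsym13 hsym14
    hsym22 hsym23 hsym24 hsym33 hsym44 hmono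
end

section
/- For every symmetric positive semidefinite K ∈ ℝ^{n×n}, the matrix Iₙ − K H₃₃ is invertible, and F₀(K) = (Iₙ − K H₃₃)⁻¹ K is symmetric (i.e. F₀(K)ᵀ = F₀(K)). -/
/-!
Write `K = Bᴴ B`. The push-through identity `(1 - A C)⁻¹ A = A (1 - C A)⁻¹` with `A = Bᴴ`,
`C = B H` gives `(1 - K H)⁻¹ K = Bᴴ (1 - B H Bᴴ)⁻¹ B`, and `det (1 - K H) = det (1 - B H Bᴴ)`.
Since `H ≤ 0`, the matrix `1 - B H Bᴴ` is positive definite, hence invertible and Hermitian,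
so `1 - K H` is invertible and `(1 - K H)⁻¹ K` is Hermitian.
-/

open Matrix

open scoped ComplexOrder MatrixOrder

namespace Matrix

variable {m n α 𝕜 : Type*} [Fintype m] [Fintype n]

theorem inv_one_sub_mul_mul_comm [DecidableEq m] [DecidableEq n] [CommRing α]
    (A : Matrix m n α) (B : Matrix n m α) : (1 - A * B)⁻¹ * A = A * (1 - B * A)⁻¹ := by
  by_cases h : IsUnit (1 - B * A).det
  · have h' : IsUnit (1 - A * B).det := by rwa [det_one_sub_mul_comm]
    have push : (1 - A * B) * A = A * (1 - B * A) := by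
      rw [Matrix.sub_mul, Matrix.mul_sub, Matrix.one_mul, Matrix.mul_one, Matrix.mul_assoc]
    calc (1 - A * B)⁻¹ * A = (1 - A * B)⁻¹ * ((1 - A * B) * A * (1 - B * A)⁻¹) := by
          rw [push, mul_nonsing_inv_cancel_right _ _ h]
      _ = A * (1 - B * A)⁻¹ := by
          rw [Matrix.mul_assoc, nonsing_inv_mul_cancel_left _ _ h']
  · have h' : ¬IsUnit (1 - A * B).det := by rwa [det_one_sub_mul_comm]
    rw [nonsing_inv_apply_not_isUnit _ h, nonsing_inv_apply_not_isUnit _ h', Matrix.zero_mul,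
      Matrix.mul_zero]

variable [RCLike 𝕜]

theorem PosSemidef.posDef_one_sub_mul_mul_conjTranspose [DecidableEq m] {H : Matrix n n 𝕜}
    (hH : (-H).PosSemidef) (B : Matrix m n 𝕜) : (1 - B * H * Bᴴ).PosDef := by
  simpa [sub_eq_add_neg, Matrix.mul_neg, Matrix.neg_mul] using
    PosDef.one.add_posSemidef (hH.mul_mul_conjTranspose_same B)

variable [DecidableEq n] {H K : Matrix n n 𝕜}

theorem PosSemidef.isUnit_one_sub_mul (hK : K.PosSemidef) (hH : (-H).PosSemidef) :
    IsUnit (1 - K * H) := by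
  obtain ⟨B, rfl⟩ := CStarAlgebra.nonneg_iff_eq_star_mul_self.mp hK.nonneg
  rw [isUnit_iff_isUnit_det, star_eq_conjTranspose, Matrix.mul_assoc, det_one_sub_mul_comm,
    ← isUnit_iff_isUnit_det]
  exact (hH.posDef_one_sub_mul_mul_conjTranspose B).isUnit

theorem PosSemidef.isHermitian_inv_one_sub_mul_mul (hK : K.PosSemidef) (hH : (-H).PosSemidef) :
    ((1 - K * H)⁻¹ * K).IsHermitian := by
  obtain ⟨B, rfl⟩ := CStarAlgebra.nonneg_iff_eq_star_mul_self.mp hK.nonneg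
  rw [star_eq_conjTranspose, Matrix.mul_assoc, ← Matrix.mul_assoc, inv_one_sub_mul_mul_comm]
  exact isHermitian_conjTranspose_mul_mul B
    (hH.posDef_one_sub_mul_mul_conjTranspose B).isHermitian.inv

end Matrix

theorem stmt_2_general (n : ℕ) (δ : ℝ) (hδ : 0 < δ)
    (H33 : Matrix (Fin n) (Fin n) ℝ)
    (hub : (-(δ • 1) - H33).PosSemidef) :
    ∀ K : Matrix (Fin n) (Fin n) ℝ, K.PosSemidef →
      IsUnit (1 - K * H33) ∧ ((1 - K * H33)⁻¹ * K)ᵀ = (1 - K * H33)⁻¹ * K := by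
  intro K hK
  have hH : (-H33).PosSemidef := by
    rw [show -H33 = (-(δ • 1) - H33) + δ • 1 by abel]
    exact hub.add (PosSemidef.one.smul hδ.le)
  exact ⟨hK.isUnit_one_sub_mul hH,
    isHermitian_iff_isSymm.mp (hK.isHermitian_inv_one_sub_mul_mul hH)⟩

/-- For every symmetric positive semidefinite `K`, the matrix
`Iₙ − K H₃₃` is invertible and `F₀(K) = (Iₙ − K H₃₃)⁻¹ K` is symmetric. -/
theorem stmt_2 (n : ℕ) (hn : 1 ≤ n) (δ δ₁ : ℝ) (hδ : 0 < δ) (hδδ₁ : δ < δ₁)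
    (H33 : Matrix (Fin n) (Fin n) ℝ) (hsym : H33ᵀ = H33)
    (hlb : (H33 + δ₁ • 1).PosSemidef) (hub : (-(δ • 1) - H33).PosSemidef) :
    ∀ K : Matrix (Fin n) (Fin n) ℝ, K.PosSemidef →
      IsUnit (1 - K * H33) ∧ ((1 - K * H33)⁻¹ * K)ᵀ = (1 - K * H33)⁻¹ * K :=
  stmt_2_general n δ hδ H33 hub
end

section
/- For every symmetric positive definite K ∈ ℝ^{n×n}, the matrix Iₙ − K H₃₃ is invertible and 0 ≤ F₀(K) ≤ −H₃₃⁻¹ ≤ (1/δ)·Iₙ in the sense of symmetric matrices (i.e. F₀(K) is positive semidefinite, −H₃₃⁻¹ − F₀(K) is positive semidefinite, and (1/δ)·Iₙ + H₃₃⁻¹ is positive semidefinite). -/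
open Matrix

/-- If `A` is positive definite and `B - A` is positive semidefinite, then
`A⁻¹ - B⁻¹` is positive semidefinite. -/
lemma aux_inv_sub_psd {n : ℕ} (A B : Matrix (Fin n) (Fin n) ℝ)
    (hA : A.PosDef) (hM : (B - A).PosSemidef) : (A⁻¹ - B⁻¹).PosSemidef := by
  have hB : B.PosDef := by
    have := hA.add_posSemidef hM
    simpa using this
  have hAdet : IsUnit A.det := hA.det_pos.ne'.isUnit
  have hBdet : IsUnit B.det := hB.det_pos.ne'.isUnit
  have hAA : A⁻¹ * A = 1 := Matrix.nonsing_inv_mul A hAdet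
  have hAA' : A * A⁻¹ = 1 := Matrix.mul_nonsing_inv A hAdet
  have hBB : B⁻¹ * B = 1 := Matrix.nonsing_inv_mul B hBdet
  have hBB' : B * B⁻¹ = 1 := Matrix.mul_nonsing_inv B hBdet
  set M := B - A with hMdef
  have key : A⁻¹ - B⁻¹ =
      B⁻¹ * M * B⁻¹ + (B⁻¹ * M) * A⁻¹ * (M * B⁻¹) := by
    have h1 : B⁻¹ * M * A⁻¹ = A⁻¹ - B⁻¹ := by
      rw [hMdef, Matrix.mul_sub, hBB, Matrix.sub_mul, one_mul, Matrix.mul_assoc, hAA', mul_one]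
    have h2 : B⁻¹ * M * B⁻¹ + (B⁻¹ * M) * A⁻¹ * (M * B⁻¹) =
        (B⁻¹ * M * A⁻¹) * ((A + M) * B⁻¹) := by
      rw [Matrix.add_mul, Matrix.mul_add]
      congr 1
      rw [Matrix.mul_assoc (B⁻¹ * M) A⁻¹ (A * B⁻¹), ← Matrix.mul_assoc A⁻¹ A B⁻¹, hAA, one_mul,
        Matrix.mul_assoc]
    have h3 : A + M = B := by rw [hMdef]; abel
    rw [h2, h3, hBB', mul_one, h1]
  rw [key]
  have hMsym : Mᴴ = M := hM.isHermitian
  have hBinv : B⁻¹ᴴ = B⁻¹ := hB.inv.isHermitian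
  have t1 : (B⁻¹ * M * B⁻¹).PosSemidef := by
    have := hM.mul_mul_conjTranspose_same B⁻¹
    rwa [hBinv] at this
  have t2 : ((B⁻¹ * M) * A⁻¹ * (M * B⁻¹)).PosSemidef := by
    have := hA.inv.posSemidef.mul_mul_conjTranspose_same (B⁻¹ * M)
    rwa [Matrix.conjTranspose_mul, hMsym, hBinv] at this
  exact t1.add t2

/-- For every symmetric positive definite `K`, the matrix
`Iₙ − K H₃₃` is invertible and `0 ≤ F₀(K) ≤ −H₃₃⁻¹ ≤ (1/δ) Iₙ` in the
sense of symmetric matrices. -/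
theorem stmt_3 (n : ℕ) (hn : 1 ≤ n) (δ δ₁ : ℝ) (hδ : 0 < δ) (hδδ₁ : δ < δ₁)
    (H33 : Matrix (Fin n) (Fin n) ℝ) (hsym : H33ᵀ = H33)
    (hlb : (H33 + δ₁ • 1).PosSemidef) (hub : (-(δ • 1) - H33).PosSemidef) :
    ∀ K : Matrix (Fin n) (Fin n) ℝ, K.PosDef →
      IsUnit (1 - K * H33) ∧
      ((1 - K * H33)⁻¹ * K).PosSemidef ∧
      (-H33⁻¹ - (1 - K * H33)⁻¹ * K).PosSemidef ∧
      ((1 / δ) • (1 : Matrix (Fin n) (Fin n) ℝ) + H33⁻¹).PosSemidef := by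
  intro K hK
  -- δ • 1 is positive definite
  have hδ1 : ((δ • 1 : Matrix (Fin n) (Fin n) ℝ)).PosDef := by
    rw [smul_one_eq_diagonal]
    exact posDef_diagonal_iff.mpr fun _ => hδ
  -- -H33 is positive definite
  have hnegH : (-H33).PosDef := by
    have h := hδ1.add_posSemidef hub
    have e : δ • (1 : Matrix (Fin n) (Fin n) ℝ) + (-(δ • 1) - H33) = -H33 := by abel
    rwa [e] at h
  have hKinv : K⁻¹.PosDef := hK.inv
  have hS : (K⁻¹ - H33).PosDef := by
    have := hKinv.add_posSemidef (hnegH.posSemidef)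
    simpa [sub_eq_add_neg] using this
  have hKdet : IsUnit K.det := hK.det_pos.ne'.isUnit
  have hKK : K * K⁻¹ = 1 := Matrix.mul_nonsing_inv K hKdet
  have hKK' : K⁻¹ * K = 1 := Matrix.nonsing_inv_mul K hKdet
  have hfact : 1 - K * H33 = K * (K⁻¹ - H33) := by
    rw [Matrix.mul_sub, hKK]
  have hUnit : IsUnit (1 - K * H33) := by
    rw [hfact]
    exact hK.isUnit.mul hS.isUnit
  have hF : (1 - K * H33)⁻¹ * K = (K⁻¹ - H33)⁻¹ := by
    rw [hfact, Matrix.mul_inv_rev, Matrix.mul_assoc, hKK', mul_one]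
  have hnegHmul : (-H33) * (-H33)⁻¹ = 1 :=
    Matrix.mul_nonsing_inv _ hnegH.det_pos.ne'.isUnit
  have hHinv : H33⁻¹ = -((-H33)⁻¹) :=
    Matrix.inv_eq_right_inv (by rw [mul_neg, ← neg_mul, hnegHmul])
  refine ⟨hUnit, ?_, ?_, ?_⟩
  · rw [hF]
    exact hS.inv.posSemidef
  · rw [hF]
    have h := aux_inv_sub_psd (-H33) (K⁻¹ - H33) hnegH (by simpa using hKinv.posSemidef)
    rw [hHinv, neg_neg]
    exact h
  · have h := aux_inv_sub_psd (δ • 1) (-H33) hδ1 (by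
      have : -H33 - δ • 1 = -(δ • 1) - H33 := by abel
      rw [this]; exact hub)
    have hδinv : ((δ • 1 : Matrix (Fin n) (Fin n) ℝ))⁻¹ = (1 / δ) • 1 := by
      apply Matrix.inv_eq_right_inv
      rw [Matrix.smul_mul, Matrix.mul_smul, one_mul, smul_smul]
      rw [mul_one_div, div_self hδ.ne', one_smul]
    rw [hHinv, ← sub_eq_add_neg]
    rwa [hδinv] at h
end

section
/- For any symmetric positive semidefinite K₁, K₂ ∈ ℝ^{n×n} with K₁ ≥ K₂ (i.e. K₁ − K₂ positive semidefinite), one has F₀(K₁) ≥ F₀(K₂), i.e. F₀(K₁) − F₀(K₂) is positive semidefinite. -/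
/-!
With `M := -H₃₃`, which is positive definite, `F₀(K) = (1 + K M)⁻¹ K = M⁻¹ - M⁻¹ (M⁻¹ + K)⁻¹ M⁻¹`.
Since `K ↦ M⁻¹ + K` is monotone and inversion is antitone on positive definite matrices
(`A ≥ B` and `B⁻¹ ≥ A⁻¹` are the two Schur-complement
conditions for `fromBlocks A 1 1 B⁻¹ ≥ 0`), `F₀` is monotone.
-/

open Matrix
open scoped ComplexOrder

namespace Matrix

variable {𝕜 n : Type*} [RCLike 𝕜] [Fintype n] [DecidableEq n]

theorem PosDef.posSemidef_inv_sub_inv {A B : Matrix n n 𝕜} (hA : A.PosDef) (hB : B.PosDef)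
    (hAB : (A - B).PosSemidef) : (B⁻¹ - A⁻¹).PosSemidef := by
  have := hA.isUnit.invertible
  have := hB.isUnit.invertible
  have hblocks : (fromBlocks A 1 1ᴴ B⁻¹).PosSemidef :=
    (PosDef.fromBlocks₂₂ A 1 hB.inv).mpr (by simpa [inv_inv_of_invertible] using hAB)
  simpa using (PosDef.fromBlocks₁₁ 1 B⁻¹ hA).mp hblocks

theorem inv_one_add_mul_mul_eq {α : Type*} [CommRing α] {K M : Matrix n n α}
    (hM : IsUnit M.det) (hMK : IsUnit (M⁻¹ + K).det) :
    (1 + K * M)⁻¹ * K = M⁻¹ - M⁻¹ * (M⁻¹ + K)⁻¹ * M⁻¹ := by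
  have hfactor : 1 + K * M = (M⁻¹ + K) * M := by
    rw [add_mul, nonsing_inv_mul M hM]
  have hK : K = (M⁻¹ + K) - M⁻¹ := by abel
  rw [hfactor, mul_inv_rev]
  nth_rewrite 2 [hK]
  rw [mul_sub, mul_assoc M⁻¹ (M⁻¹ + K)⁻¹, nonsing_inv_mul _ hMK, mul_one]

theorem posSemidef_inv_one_add_mul_mul_sub {M K₁ K₂ : Matrix n n 𝕜} (hM : M.PosDef)
    (hK₁ : K₁.PosSemidef) (hK₂ : K₂.PosSemidef) (hK : (K₁ - K₂).PosSemidef) :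
    ((1 + K₁ * M)⁻¹ * K₁ - (1 + K₂ * M)⁻¹ * K₂).PosSemidef := by
  have hA₁ : (M⁻¹ + K₁).PosDef := hM.inv.add_posSemidef hK₁
  have hA₂ : (M⁻¹ + K₂).PosDef := hM.inv.add_posSemidef hK₂
  have hinv := hA₁.posSemidef_inv_sub_inv hA₂ (by simpa using hK)
  have hMdet := (isUnit_iff_isUnit_det M).mp hM.isUnit
  rw [inv_one_add_mul_mul_eq hMdet ((isUnit_iff_isUnit_det _).mp hA₁.isUnit),
    inv_one_add_mul_mul_eq hMdet ((isUnit_iff_isUnit_det _).mp hA₂.isUnit)]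
  convert hinv.mul_mul_conjTranspose_same M⁻¹ using 1
  rw [hM.inv.isHermitian.eq, mul_sub, sub_mul]
  abel

end Matrix

theorem stmt_4_general (n : ℕ) (δ : ℝ) (hδ : 0 < δ)
    (H33 : Matrix (Fin n) (Fin n) ℝ)
    (hub : (-(δ • 1) - H33).PosSemidef) :
    ∀ K₁ K₂ : Matrix (Fin n) (Fin n) ℝ, K₁.PosSemidef → K₂.PosSemidef →
      (K₁ - K₂).PosSemidef →
      ((1 - K₁ * H33)⁻¹ * K₁ - (1 - K₂ * H33)⁻¹ * K₂).PosSemidef := by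
  intro K₁ K₂ hK₁ hK₂ hK
  have hM : (-H33).PosDef := by
    convert PosDef.posSemidef_add hub (PosDef.one.smul hδ) using 1
    abel
  simpa [sub_eq_add_neg] using posSemidef_inv_one_add_mul_mul_sub hM hK₁ hK₂ hK

/-- For symmetric positive semidefinite `K₁ ≥ K₂`, one has
`F₀(K₁) ≥ F₀(K₂)`, where `F₀(K) = (Iₙ − K H₃₃)⁻¹ K`. -/
theorem stmt_4 (n : ℕ) (hn : 1 ≤ n) (δ δ₁ : ℝ) (hδ : 0 < δ) (hδδ₁ : δ < δ₁)
    (H33 : Matrix (Fin n) (Fin n) ℝ) (hsym : H33ᵀ = H33)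
    (hlb : (H33 + δ₁ • 1).PosSemidef) (hub : (-(δ • 1) - H33).PosSemidef) :
    ∀ K₁ K₂ : Matrix (Fin n) (Fin n) ℝ, K₁.PosSemidef → K₂.PosSemidef →
      (K₁ - K₂).PosSemidef →
      ((1 - K₁ * H33)⁻¹ * K₁ - (1 - K₂ * H33)⁻¹ * K₂).PosSemidef :=
  stmt_4_general n δ hδ H33 hub
end

section
/- For every ϱ ∈ [0,1], the Riccati equation has no blow-up: its maximal backward solution K_·(ϱ) exists on all of (−∞, T] (i.e. t_ϱ = −∞), and there is a constant C > 0 (depending only on T, β and the supremum norms of the coefficients H_{kl} on [0,T]) such that 0 ≤ K_t(ϱ) ≤ C·Iₙ for all t ∈ [0,T] and all ϱ ∈ [0,1]. -/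
open Filter Matrix Set

attribute [local instance] Matrix.normedAddCommGroup Matrix.normedSpace

/-- Right-hand side of the matrix Riccati equation `−K̇ = Ric ϱ t K`. -/
noncomputable def Ric {n : ℕ}
    (H11 H12 H13 H14 H21 H22 H23 H24 H31 H32 H33 H41 H42 H44 :
      ℝ → Matrix (Fin n) (Fin n) ℝ) (ϱ t : ℝ)
    (K : Matrix (Fin n) (Fin n) ℝ) : Matrix (Fin n) (Fin n) ℝ :=
  K * H21 t + H12 t * K + H11 t + ϱ • (K * H22 t * K)
    + (ϱ ^ 2) • ((K * H23 t + H13 t) * ((1 - K * H33 t)⁻¹ * K) * (H31 t + H32 t * K))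
    + (ϱ ^ 2) • ((K * H24 t + H14 t) * ((1 - K * H44 t)⁻¹ * K) * (H41 t + H42 t * K))

open Real Topology

/-!
For `ϱ ∈ [0,1]` and `K ≥ 0`, testing the monotonicity condition (H3) at `(x, ϱKx, ϱz, ϱθ)`, with
`z = F₀(K)(H₃₁ + H₃₂K)x` and `θ = F₁(K)(H₄₁ + H₄₂K)x`, bounds the quadratic form of the Riccati
right-hand side by `(α + γ tr K)|x|²`, where `α, γ` depend continuously on the coefficients: since
`z = K(H₃₁x + H₃₂Kx + H₃₃z)`, the terms quadratic in `K` come with a favourable sign, and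
`⟨H₃₁x, z⟩` is absorbed by `-β|z|²`. Taking traces, `-(d/dt) tr K ≤ c + d tr K`, so by Grönwall
`tr K` is bounded on every `[a, T]` inside the existence interval. As `‖K‖ ≤ tr K` and
`K ≤ (tr K) I` for `K ≥ 0`, the solution cannot blow up and is uniformly bounded on `[0, T]`.
-/

namespace Matrix

variable {m : Type*}

lemma PosSemidef.transpose_eq {K : Matrix m m ℝ} (hK : K.PosSemidef) : Kᵀ = K := by
  simpa [IsSymm] using hK.1

variable [Fintype m]

lemma dotProduct_self_nonneg (v : m → ℝ) : 0 ≤ v ⬝ᵥ v := by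
  simpa using dotProduct_star_self_nonneg v

lemma mulVec_dotProduct_comm_of_transpose_eq {A B : Matrix m m ℝ} (h : Aᵀ = B) (u v : m → ℝ) :
    (A *ᵥ u) ⬝ᵥ v = (B *ᵥ v) ⬝ᵥ u := by
  rw [← h, mulVec_transpose, ← dotProduct_mulVec, dotProduct_comm]

lemma dotProduct_transpose_mul_mulVec (A B : Matrix m m ℝ) (x : m → ℝ) :
    x ⬝ᵥ ((Aᵀ * B) *ᵥ x) = (A *ᵥ x) ⬝ᵥ (B *ᵥ x) := by
  rw [← mulVec_mulVec, dotProduct_comm, mulVec_dotProduct_comm_of_transpose_eq rfl,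
    transpose_transpose]

lemma two_mul_dotProduct_sub_le (u v : m → ℝ) {β : ℝ} (hβ : 0 < β) :
    2 * (u ⬝ᵥ v) - β * (v ⬝ᵥ v) ≤ (u ⬝ᵥ u) / β := by
  have h := dotProduct_self_nonneg (u - β • v)
  simp only [sub_dotProduct, dotProduct_sub, smul_dotProduct, dotProduct_smul, smul_eq_mul,
    dotProduct_comm v u] at h
  rw [le_div_iff₀ hβ]
  nlinarith

lemma mulVec_dotProduct_self_le (A : Matrix m m ℝ) (u : m → ℝ) :
    (A *ᵥ u) ⬝ᵥ (A *ᵥ u) ≤ trace (Aᵀ * A) * (u ⬝ᵥ u) := by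
  have htrace : trace (Aᵀ * A) = ∑ i, ∑ j, A i j ^ 2 := by
    simp only [trace, diag, mul_apply, transpose_apply, sq]
    exact Finset.sum_comm
  rw [htrace, Finset.sum_mul]
  simp only [dotProduct, mulVec, ← sq]
  exact Finset.sum_le_sum fun i _ => Finset.sum_mul_sq_le_sq_mul_sq _ _ _

lemma two_mul_dotProduct_le (u v : m → ℝ) : 2 * (u ⬝ᵥ v) ≤ u ⬝ᵥ u + v ⬝ᵥ v := by
  have h := two_mul_dotProduct_sub_le u v one_pos
  linarith [div_one (u ⬝ᵥ u)]

lemma mulVec_dotProduct_neg_of_le {β : ℝ} (hβ : 0 < β) {G : Matrix m m ℝ}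
    (hG : ∀ w, (G *ᵥ w) ⬝ᵥ w ≤ -β * (w ⬝ᵥ w)) (w : m → ℝ) (hw : w ≠ 0) :
    (G *ᵥ w) ⬝ᵥ w < 0 := by
  have hpos : 0 < w ⬝ᵥ w :=
    (dotProduct_self_nonneg w).lt_of_ne (Ne.symm (mt dotProduct_self_eq_zero.mp hw))
  nlinarith [hG w]

namespace PosSemidef

variable {K : Matrix m m ℝ}

lemma exists_eq_transpose_mul_self (hK : K.PosSemidef) : ∃ B : Matrix m m ℝ, K = Bᵀ * B := by
  classical
  open scoped MatrixOrder in
  obtain ⟨B, hB⟩ := CStarAlgebra.nonneg_iff_eq_star_mul_self.mp hK.nonneg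
  exact ⟨B, by simpa [star_eq_conjTranspose] using hB⟩

lemma dotProduct_mulVec_le_trace_mul (hK : K.PosSemidef) (x : m → ℝ) :
    x ⬝ᵥ (K *ᵥ x) ≤ trace K * (x ⬝ᵥ x) := by
  obtain ⟨B, rfl⟩ := hK.exists_eq_transpose_mul_self
  rw [dotProduct_transpose_mul_mulVec]
  exact mulVec_dotProduct_self_le B x

lemma two_mul_dotProduct_mulVec_le (hK : K.PosSemidef) (x y : m → ℝ) :
    2 * (x ⬝ᵥ (K *ᵥ y)) ≤ x ⬝ᵥ (K *ᵥ x) + y ⬝ᵥ (K *ᵥ y) := by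
  have h := hK.dotProduct_mulVec_nonneg (x - y)
  have hsymm : y ⬝ᵥ (K *ᵥ x) = x ⬝ᵥ (K *ᵥ y) := by
    rw [dotProduct_comm, mulVec_dotProduct_comm_of_transpose_eq hK.transpose_eq, dotProduct_comm]
  simp only [star_trivial, mulVec_sub, dotProduct_sub, sub_dotProduct, hsymm] at h
  linarith

lemma abs_apply_le_trace (hK : K.PosSemidef) (i j : m) : |K i j| ≤ trace K := by
  classical
  have hdiag : ∀ k, K k k ≤ trace K := fun k =>
    Finset.single_le_sum (f := fun l => K l l) (fun l _ => hK.diag_nonneg) (Finset.mem_univ k)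
  have h₁ := hK.two_mul_dotProduct_mulVec_le (Pi.single i 1) (Pi.single j 1)
  have h₂ := hK.two_mul_dotProduct_mulVec_le (Pi.single i 1) (-Pi.single j 1)
  simp only [mulVec_single, MulOpposite.op_one, one_smul, single_dotProduct, col_apply, one_mul,
    mulVec_neg, dotProduct_neg, mul_neg, neg_dotProduct, neg_neg] at h₁ h₂
  rw [abs_le]
  constructor <;> linarith [hdiag i, hdiag j]

lemma norm_le_trace (hK : K.PosSemidef) : ‖K‖ ≤ trace K :=
  (norm_le_iff (hK.trace_nonneg)).2 fun i j => hK.abs_apply_le_trace i j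

lemma smul_one_sub_of_trace_le [DecidableEq m] (hK : K.PosSemidef) {C : ℝ} (hC : trace K ≤ C) :
    (C • (1 : Matrix m m ℝ) - K).PosSemidef := by
  refine .of_dotProduct_mulVec_nonneg ?_ fun x => ?_
  · simp [IsHermitian, hK.transpose_eq]
  · have := hK.dotProduct_mulVec_le_trace_mul x
    have hx := dotProduct_self_nonneg x
    simp only [star_trivial, sub_mulVec, smul_mulVec, one_mulVec, dotProduct_sub,
      dotProduct_smul, smul_eq_mul]
    nlinarith

end PosSemidef

variable [DecidableEq m] {K H : Matrix m m ℝ}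

lemma isUnit_det_one_sub_mul (hK : K.PosSemidef) (hH : ∀ z ≠ 0, (H *ᵥ z) ⬝ᵥ z < 0) :
    IsUnit (1 - K * H).det := by
  rw [isUnit_iff_ne_zero]
  intro hdet
  obtain ⟨v, hv, hkernel⟩ := exists_mulVec_eq_zero_iff.mpr hdet
  have hfix : v = K *ᵥ (H *ᵥ v) := by
    rw [sub_mulVec, one_mulVec, sub_eq_zero, ← mulVec_mulVec] at hkernel
    exact hkernel
  have hnonneg := hK.dotProduct_mulVec_nonneg (H *ᵥ v)
  rw [star_trivial, ← hfix] at hnonneg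
  exact (hH v hv).not_ge hnonneg

lemma dotProduct_resolvent_nonneg (hK : K.PosSemidef) (hdet : IsUnit (1 - K * H).det)
    (u : m → ℝ) :
    0 ≤ (u + H *ᵥ (((1 - K * H)⁻¹ * K) *ᵥ u)) ⬝ᵥ (((1 - K * H)⁻¹ * K) *ᵥ u) := by
  set z := ((1 - K * H)⁻¹ * K) *ᵥ u
  have hz : z = K *ᵥ (u + H *ᵥ z) := by
    have h : (1 - K * H) *ᵥ z = K *ᵥ u := by
      rw [mulVec_mulVec, ← mul_assoc, mul_nonsing_inv _ hdet, one_mul]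
    rw [sub_mulVec, one_mulVec, ← mulVec_mulVec, sub_eq_iff_eq_add] at h
    rwa [mulVec_add]
  have h := hK.dotProduct_mulVec_nonneg (u + H *ᵥ z)
  rwa [star_trivial, ← hz] at h

lemma trace_le_card_mul_of_dotProduct_mulVec_le {A : Matrix m m ℝ} {c : ℝ}
    (h : ∀ x, x ⬝ᵥ (A *ᵥ x) ≤ c * (x ⬝ᵥ x)) : trace A ≤ Fintype.card m * c := by
  have hdiag : ∀ i, A i i ≤ c := fun i => by
    simpa [mulVec_single_one] using h (Pi.single i 1)
  calc trace A = ∑ i, A i i := rfl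
    _ ≤ ∑ _i : m, c := Finset.sum_le_sum fun i _ => hdiag i
    _ = Fintype.card m * c := by simp

end Matrix

/-- Assumption (H3) at a fixed time. -/
def MonotonicityCondition {m : Type*} [Fintype m] (β : ℝ)
    (G11 G12 G13 G14 G21 G22 G23 G24 G31 G32 G33 G41 G42 G44 : Matrix m m ℝ) : Prop :=
  ∀ x y z θ : m → ℝ,
    -((G11 *ᵥ x + G12 *ᵥ y + G13 *ᵥ z + G14 *ᵥ θ) ⬝ᵥ x)
      + (G21 *ᵥ x + G22 *ᵥ y + G23 *ᵥ z + G24 *ᵥ θ) ⬝ᵥ y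
      + (G31 *ᵥ x + G32 *ᵥ y + G33 *ᵥ z) ⬝ᵥ z
      + (G41 *ᵥ x + G42 *ᵥ y + G44 *ᵥ θ) ⬝ᵥ θ
      ≤ -β * (x ⬝ᵥ x + y ⬝ᵥ y + z ⬝ᵥ z + θ ⬝ᵥ θ)

namespace MonotonicityCondition

variable {m : Type*} [Fintype m] {β : ℝ}
  {G11 G12 G13 G14 G21 G22 G23 G24 G31 G32 G33 G41 G42 G44 : Matrix m m ℝ}

lemma mulVec₂₂_dotProduct_le
    (h : MonotonicityCondition β G11 G12 G13 G14 G21 G22 G23 G24 G31 G32 G33 G41 G42 G44)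
    (y : m → ℝ) : (G22 *ᵥ y) ⬝ᵥ y ≤ -β * (y ⬝ᵥ y) := by
  simpa using h 0 y 0 0

lemma mulVec₃₃_dotProduct_le
    (h : MonotonicityCondition β G11 G12 G13 G14 G21 G22 G23 G24 G31 G32 G33 G41 G42 G44)
    (z : m → ℝ) : (G33 *ᵥ z) ⬝ᵥ z ≤ -β * (z ⬝ᵥ z) := by
  simpa using h 0 0 z 0

lemma mulVec₄₄_dotProduct_le
    (h : MonotonicityCondition β G11 G12 G13 G14 G21 G22 G23 G24 G31 G32 G33 G41 G42 G44)
    (θ : m → ℝ) : (G44 *ᵥ θ) ⬝ᵥ θ ≤ -β * (θ ⬝ᵥ θ) := by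
  simpa using h 0 0 0 θ

lemma le_of_transpose_eq
    (h : MonotonicityCondition β G11 G12 G13 G14 G21 G22 G23 G24 G31 G32 G33 G41 G42 G44)
    (h12 : G12ᵀ = G21) (h13 : G13ᵀ = G31) (h14 : G14ᵀ = G41) (h23 : G23ᵀ = G32)
    (h24 : G24ᵀ = G42) (x y z θ : m → ℝ) :
    -((G11 *ᵥ x) ⬝ᵥ x) + (G22 *ᵥ y) ⬝ᵥ y + 2 * ((G32 *ᵥ y) ⬝ᵥ z) + (G33 *ᵥ z) ⬝ᵥ z
      + 2 * ((G42 *ᵥ y) ⬝ᵥ θ) + (G44 *ᵥ θ) ⬝ᵥ θ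
      ≤ -β * (x ⬝ᵥ x + y ⬝ᵥ y + z ⬝ᵥ z + θ ⬝ᵥ θ) := by
  have hH3 := h x y z θ
  simp only [add_dotProduct] at hH3
  rw [mulVec_dotProduct_comm_of_transpose_eq h12, mulVec_dotProduct_comm_of_transpose_eq h13,
    mulVec_dotProduct_comm_of_transpose_eq h14, mulVec_dotProduct_comm_of_transpose_eq h23,
    mulVec_dotProduct_comm_of_transpose_eq h24] at hH3
  linarith

end MonotonicityCondition

section Riccati

variable {n : ℕ} {H11 H12 H13 H14 H21 H22 H23 H24 H31 H32 H33 H41 H42 H44 :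
  ℝ → Matrix (Fin n) (Fin n) ℝ} {β ϱ t : ℝ} {K : Matrix (Fin n) (Fin n) ℝ}

lemma dotProduct_Ric_mulVec (h12 : (H12 t)ᵀ = H21 t) (h13 : (H13 t)ᵀ = H31 t)
    (h14 : (H14 t)ᵀ = H41 t) (h23 : (H23 t)ᵀ = H32 t) (h24 : (H24 t)ᵀ = H42 t) (hK : Kᵀ = K)
    (x : Fin n → ℝ) :
    x ⬝ᵥ (Ric H11 H12 H13 H14 H21 H22 H23 H24 H31 H32 H33 H41 H42 H44 ϱ t K *ᵥ x)
      = 2 * ((K *ᵥ x) ⬝ᵥ (H21 t *ᵥ x)) + (H11 t *ᵥ x) ⬝ᵥ x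
        + ϱ * ((H22 t *ᵥ (K *ᵥ x)) ⬝ᵥ (K *ᵥ x))
        + ϱ ^ 2 * (((H31 t + H32 t * K) *ᵥ x)
            ⬝ᵥ (((1 - K * H33 t)⁻¹ * K) *ᵥ ((H31 t + H32 t * K) *ᵥ x)))
        + ϱ ^ 2 * (((H41 t + H42 t * K) *ᵥ x)
            ⬝ᵥ (((1 - K * H44 t)⁻¹ * K) *ᵥ ((H41 t + H42 t * K) *ᵥ x))) := by
  set P3 := H31 t + H32 t * K
  set P4 := H41 t + H42 t * K
  have hP3 : K * H23 t + H13 t = P3ᵀ := by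
    rw [transpose_add, transpose_mul, hK, ← h23, ← h13, transpose_transpose,
      transpose_transpose, add_comm]
  have hP4 : K * H24 t + H14 t = P4ᵀ := by
    rw [transpose_add, transpose_mul, hK, ← h24, ← h14, transpose_transpose,
      transpose_transpose, add_comm]
  have h21 : (H21 t)ᵀ = H12 t := by rw [← h12, transpose_transpose]
  have hRic : Ric H11 H12 H13 H14 H21 H22 H23 H24 H31 H32 H33 H41 H42 H44 ϱ t K
      = Kᵀ * H21 t + (H21 t)ᵀ * K + H11 t + ϱ • (Kᵀ * (H22 t * K))
        + ϱ ^ 2 • (P3ᵀ * (((1 - K * H33 t)⁻¹ * K) * P3))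
        + ϱ ^ 2 • (P4ᵀ * (((1 - K * H44 t)⁻¹ * K) * P4)) := by
    rw [hK, h21, ← hP3, ← hP4]
    simp only [Ric, mul_assoc]
    rfl
  rw [hRic]
  simp only [add_mulVec, smul_mulVec, dotProduct_add, dotProduct_smul, smul_eq_mul,
    dotProduct_transpose_mul_mulVec]
  rw [← mulVec_mulVec _ (H22 t), ← mulVec_mulVec _ _ P3, ← mulVec_mulVec _ _ P4,
    dotProduct_comm x, dotProduct_comm (H21 t *ᵥ x), dotProduct_comm (K *ᵥ x) (H22 t *ᵥ K *ᵥ x)]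
  ring

lemma dotProduct_Ric_mulVec_le (hβ : 0 < β) (hϱ : ϱ ∈ Icc (0 : ℝ) 1)
    (h12 : (H12 t)ᵀ = H21 t) (h13 : (H13 t)ᵀ = H31 t) (h14 : (H14 t)ᵀ = H41 t)
    (h23 : (H23 t)ᵀ = H32 t) (h24 : (H24 t)ᵀ = H42 t)
    (hmono : MonotonicityCondition β (H11 t) (H12 t) (H13 t) (H14 t) (H21 t) (H22 t) (H23 t)
      (H24 t) (H31 t) (H32 t) (H33 t) (H41 t) (H42 t) (H44 t))
    (hK : K.PosSemidef) (x : Fin n → ℝ) :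
    x ⬝ᵥ (Ric H11 H12 H13 H14 H21 H22 H23 H24 H31 H32 H33 H41 H42 H44 ϱ t K *ᵥ x)
      ≤ 2 * ((K *ᵥ x) ⬝ᵥ (H21 t *ᵥ x)) + 2 * ((H11 t *ᵥ x) ⬝ᵥ x)
        + ((H31 t *ᵥ x) ⬝ᵥ (H31 t *ᵥ x) + (H41 t *ᵥ x) ⬝ᵥ (H41 t *ᵥ x)) / β := by
  rw [dotProduct_Ric_mulVec h12 h13 h14 h23 h24 hK.transpose_eq, add_div]
  set y := K *ᵥ x
  set z := ((1 - K * H33 t)⁻¹ * K) *ᵥ ((H31 t + H32 t * K) *ᵥ x)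
  set θ := ((1 - K * H44 t)⁻¹ * K) *ᵥ ((H41 t + H42 t * K) *ᵥ x)
  have hH3 := hmono.le_of_transpose_eq h12 h13 h14 h23 h24 x (ϱ • y) (ϱ • z) (ϱ • θ)
  simp only [mulVec_smul, dotProduct_smul, smul_dotProduct, smul_eq_mul] at hH3
  have h22 : (H22 t *ᵥ y) ⬝ᵥ y ≤ 0 :=
    (hmono.mulVec₂₂_dotProduct_le y).trans (by nlinarith [dotProduct_self_nonneg y])
  have hs3 : 0 ≤ ((H31 t + H32 t * K) *ᵥ x + H33 t *ᵥ z) ⬝ᵥ z := dotProduct_resolvent_nonneg hK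
    (isUnit_det_one_sub_mul hK (mulVec_dotProduct_neg_of_le hβ hmono.mulVec₃₃_dotProduct_le)) _
  have hs4 : 0 ≤ ((H41 t + H42 t * K) *ᵥ x + H44 t *ᵥ θ) ⬝ᵥ θ := dotProduct_resolvent_nonneg hK
    (isUnit_det_one_sub_mul hK (mulVec_dotProduct_neg_of_le hβ hmono.mulVec₄₄_dotProduct_le)) _
  have hamgm3 := two_mul_dotProduct_sub_le (H31 t *ᵥ x) z hβ
  have hamgm4 := two_mul_dotProduct_sub_le (H41 t *ᵥ x) θ hβ
  have hS3 : 0 ≤ (H31 t *ᵥ x) ⬝ᵥ (H31 t *ᵥ x) / β := div_nonneg (dotProduct_self_nonneg _) hβ.le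
  have hS4 : 0 ≤ (H41 t *ᵥ x) ⬝ᵥ (H41 t *ᵥ x) / β := div_nonneg (dotProduct_self_nonneg _) hβ.le
  obtain ⟨hϱ0, hϱ1⟩ := hϱ
  have hϱsq : 0 ≤ 1 - ϱ ^ 2 := by nlinarith
  simp only [add_mulVec, ← mulVec_mulVec, add_dotProduct] at hs3 hs4 ⊢
  linarith [mul_nonneg (sq_nonneg ϱ) hs3, mul_nonneg (sq_nonneg ϱ) hs4,
    mul_nonpos_of_nonneg_of_nonpos (by nlinarith : 0 ≤ ϱ - ϱ ^ 2) h22,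
    mul_nonpos_of_nonneg_of_nonpos (sq_nonneg ϱ) (sub_nonpos.2 hamgm3),
    mul_nonpos_of_nonneg_of_nonpos (sq_nonneg ϱ) (sub_nonpos.2 hamgm4),
    mul_nonneg hϱsq hS3, mul_nonneg hϱsq hS4, mul_nonneg hβ.le (dotProduct_self_nonneg x),
    mul_nonneg hβ.le (mul_nonneg (sq_nonneg ϱ) (dotProduct_self_nonneg y))]

lemma trace_Ric_le (hβ : 0 < β) (hϱ : ϱ ∈ Icc (0 : ℝ) 1)
    (h12 : (H12 t)ᵀ = H21 t) (h13 : (H13 t)ᵀ = H31 t) (h14 : (H14 t)ᵀ = H41 t)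
    (h23 : (H23 t)ᵀ = H32 t) (h24 : (H24 t)ᵀ = H42 t)
    (hmono : MonotonicityCondition β (H11 t) (H12 t) (H13 t) (H14 t) (H21 t) (H22 t) (H23 t)
      (H24 t) (H31 t) (H32 t) (H33 t) (H41 t) (H42 t) (H44 t))
    (hK : K.PosSemidef) :
    trace (Ric H11 H12 H13 H14 H21 H22 H23 H24 H31 H32 H33 H41 H42 H44 ϱ t K)
      ≤ n * (1 + trace ((H11 t)ᵀ * H11 t)
          + (trace ((H31 t)ᵀ * H31 t) + trace ((H41 t)ᵀ * H41 t)) / β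
          + (1 + trace ((H21 t)ᵀ * H21 t)) * trace K) := by
  refine (trace_le_card_mul_of_dotProduct_mulVec_le fun x => ?_).trans_eq
    (by rw [Fintype.card_fin])
  have hRic := dotProduct_Ric_mulVec_le hβ hϱ h12 h13 h14 h23 h24 hmono hK x
  have hX := dotProduct_self_nonneg x
  have hτ := hK.trace_nonneg
  have h21 : 2 * ((K *ᵥ x) ⬝ᵥ (H21 t *ᵥ x)) ≤ trace K * (x ⬝ᵥ x)
      + trace K * ((H21 t *ᵥ x) ⬝ᵥ (H21 t *ᵥ x)) := by
    rw [mulVec_dotProduct_comm_of_transpose_eq hK.transpose_eq, dotProduct_comm]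
    exact (hK.two_mul_dotProduct_mulVec_le _ _).trans (add_le_add
      (hK.dotProduct_mulVec_le_trace_mul _) (hK.dotProduct_mulVec_le_trace_mul _))
  have h11 := two_mul_dotProduct_le (H11 t *ᵥ x) x
  have hq11 := mulVec_dotProduct_self_le (H11 t) x
  have hq21 := mul_le_mul_of_nonneg_left (mulVec_dotProduct_self_le (H21 t) x) hτ
  have hq3 := div_le_div_of_nonneg_right (add_le_add (mulVec_dotProduct_self_le (H31 t) x)
    (mulVec_dotProduct_self_le (H41 t) x)) hβ.le
  rw [← add_mul, mul_div_right_comm] at hq3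
  linarith

lemma exists_trace_Ric_le (hβ : 0 < β) (hc11 : Continuous H11) (hc21 : Continuous H21)
    (hc31 : Continuous H31) (hc41 : Continuous H41)
    (h12 : ∀ t, (H12 t)ᵀ = H21 t) (h13 : ∀ t, (H13 t)ᵀ = H31 t) (h14 : ∀ t, (H14 t)ᵀ = H41 t)
    (h23 : ∀ t, (H23 t)ᵀ = H32 t) (h24 : ∀ t, (H24 t)ᵀ = H42 t) {T : ℝ}
    (hmono : ∀ t ≤ T, MonotonicityCondition β (H11 t) (H12 t) (H13 t) (H14 t) (H21 t) (H22 t)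
      (H23 t) (H24 t) (H31 t) (H32 t) (H33 t) (H41 t) (H42 t) (H44 t)) (a : ℝ) :
    ∃ c d : ℝ, 0 ≤ c ∧ 0 ≤ d ∧ ∀ ϱ ∈ Icc (0 : ℝ) 1, ∀ t ∈ Icc a T,
      ∀ M : Matrix (Fin n) (Fin n) ℝ, M.PosSemidef →
        trace (Ric H11 H12 H13 H14 H21 H22 H23 H24 H31 H32 H33 H41 H42 H44 ϱ t M)
          ≤ c + d * trace M := by
  obtain ⟨A, hA⟩ := (isCompact_Icc (a := a) (b := T)).bddAbove_image
    (f := fun t => 1 + trace ((H11 t)ᵀ * H11 t)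
      + (trace ((H31 t)ᵀ * H31 t) + trace ((H41 t)ᵀ * H41 t)) / β) (by fun_prop)
  obtain ⟨G, hG⟩ := (isCompact_Icc (a := a) (b := T)).bddAbove_image
    (f := fun t => 1 + trace ((H21 t)ᵀ * H21 t)) (by fun_prop)
  refine ⟨n * max A 0, n * max G 0, by positivity, by positivity, fun ϱ hϱ t ht M hM => ?_⟩
  have hAt := (hA (mem_image_of_mem _ ht)).trans (le_max_left A 0)
  have hGt := (hG (mem_image_of_mem _ ht)).trans (le_max_left G 0)
  calc _ ≤ _ := trace_Ric_le hβ hϱ (h12 t) (h13 t) (h14 t) (h23 t) (h24 t) (hmono t ht.2) hM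
    _ ≤ n * (max A 0 + max G 0 * trace M) := by gcongr; exact hM.trace_nonneg
    _ = _ := by ring

end Riccati

lemma le_mul_exp_of_neg_deriv_le {ψ ψ' : ℝ → ℝ} {c d s T : ℝ} (hc : 0 ≤ c) (hd : 0 ≤ d)
    (hsT : s ≤ T) (hψ : ContinuousOn ψ (Icc s T))
    (hderiv : ∀ t ∈ Ioo s T, HasDerivAt ψ (ψ' t) t)
    (hbound : ∀ t ∈ Ioo s T, -ψ' t ≤ c + d * ψ t) (hT : ψ T ≤ 0) :
    ψ s ≤ c * (T - s) * exp (d * (T - s)) := by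
  -- its derivative `exp (d * t) * (ψ' t + d * ψ t) + c * exp (d * T)` is at least
  -- `c * (exp (d * T) - exp (d * t)) ≥ 0`
  have hmono : MonotoneOn (fun t => exp (d * t) * ψ t + c * t * exp (d * T)) (Icc s T) := by
    refine monotoneOn_of_hasDerivWithinAt_nonneg (convex_Icc s T) (by fun_prop)
      (fun t ht => ?_) (f' := fun t => exp (d * t) * d * ψ t + exp (d * t) * ψ' t + c * exp (d * T))
      (fun t ht => ?_) <;> rw [interior_Icc] at ht
    · have h := (((hasDerivAt_id t).const_mul d).exp.mul (hderiv t ht)).add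
        (((hasDerivAt_id t).const_mul c).mul_const (exp (d * T)))
      simp only [id, mul_one] at h
      exact h.hasDerivWithinAt
    · have hexp : exp (d * t) ≤ exp (d * T) := exp_le_exp.2 (by nlinarith [ht.2])
      have h := mul_le_mul_of_nonneg_left (hbound t ht) (exp_pos (d * t)).le
      nlinarith
  have h := hmono ⟨le_rfl, hsT⟩ ⟨hsT, le_rfl⟩ hsT
  rw [mul_sub d, exp_sub, ← mul_div_assoc, le_div_iff₀ (exp_pos _)]
  nlinarith [exp_pos (d * T)]

namespace Matrix

variable {m : Type*} [Fintype m]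

lemma trace_le_of_hasDerivAt_neg {R : ℝ → Matrix m m ℝ → Matrix m m ℝ} {k : ℝ → Matrix m m ℝ}
    {tb : EReal} {a s T c d : ℝ} (hc : 0 ≤ c) (hd : 0 ≤ d) (has : a ≤ s) (hsT : s ≤ T)
    (hs : tb < s) (hk : ContinuousOn k {t : ℝ | tb < t ∧ t ≤ T})
    (hderiv : ∀ t : ℝ, tb < t → t < T → HasDerivAt k (-R t (k t)) t)
    (hpsd : ∀ t : ℝ, tb < t → t ≤ T → (k t).PosSemidef)
    (hR : ∀ t ∈ Icc a T, ∀ M : Matrix m m ℝ, M.PosSemidef → trace (R t M) ≤ c + d * trace M)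
    (hT : k T = 0) :
    trace (k s) ≤ c * (T - a) * exp (d * (T - a)) := by
  let tr := (traceLinearMap m ℝ ℝ).toContinuousLinearMap
  have hsub : Icc s T ⊆ {t : ℝ | tb < t ∧ t ≤ T} :=
    fun t ht => ⟨hs.trans_le (EReal.coe_le_coe_iff.2 ht.1), ht.2⟩
  have htb : ∀ t ∈ Ioo s T, tb < t := fun t ht => (hsub (Ioo_subset_Icc_self ht)).1
  have hTs : T - s ≤ T - a := by linarith
  calc trace (k s) ≤ c * (T - s) * exp (d * (T - s)) :=
        le_mul_exp_of_neg_deriv_le (ψ := fun t => tr (k t)) (ψ' := fun t => tr (-R t (k t)))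
          hc hd hsT (tr.continuous.comp_continuousOn (hk.mono hsub))
          (fun t ht => tr.hasFDerivAt.comp_hasDerivAt t (hderiv t (htb t ht) ht.2))
          (fun t ht => by
            simpa [tr] using hR t ⟨has.trans ht.1.le, ht.2.le⟩ _ (hpsd t (htb t ht) ht.2.le))
          (by simp [tr, hT])
    _ ≤ c * (T - a) * exp (d * (T - a)) :=
        mul_le_mul (mul_le_mul_of_nonneg_left hTs hc)
          (exp_le_exp.2 (mul_le_mul_of_nonneg_left hTs hd)) (exp_pos _).le
          (mul_nonneg hc (by linarith))

end Matrix

lemma eq_bot_of_forall_trace_le {m : Type*} [Fintype m] {k : ℝ → Matrix m m ℝ} {tb : EReal}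
    {T : ℝ} (htb : tb < T) (hpsd : ∀ t : ℝ, tb < t → t ≤ T → (k t).PosSemidef)
    (hbdd : ∀ a : ℝ, ∃ B, ∀ t ∈ Icc a T, tb < t → trace (k t) ≤ B)
    (hblow : ⊥ < tb → Tendsto (fun t => ‖k t‖) (𝓝[>] tb.toReal) atTop) :
    tb = ⊥ := by
  by_contra hbot
  obtain ⟨r, rfl⟩ : ∃ r : ℝ, tb = r :=
    ⟨tb.toReal, (EReal.coe_toReal (htb.trans (EReal.coe_lt_top T)).ne hbot).symm⟩
  obtain ⟨B, hB⟩ := hbdd r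
  have hrT : r < T := EReal.coe_lt_coe_iff.1 htb
  obtain ⟨t, hBt, htT, hrt⟩ := (((hblow (EReal.bot_lt_coe r)).eventually_gt_atTop B).and
    ((eventually_lt_nhds hrT).filter_mono nhdsWithin_le_nhds |>.and self_mem_nhdsWithin)).exists
  have hrt' : (r : EReal) < t := EReal.coe_lt_coe_iff.2 hrt
  linarith [(hpsd t hrt' htT.le).norm_le_trace, hB t ⟨hrt.le, htT.le⟩ hrt']

theorem stmt_6_general
    (T : ℝ) (n : ℕ) (β : ℝ) (hβ : 0 < β)
    (H11 H12 H13 H14 H21 H22 H23 H24 H31 H32 H33 H41 H42 H44 :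
      ℝ → Matrix (Fin n) (Fin n) ℝ)
    (hc11 : Continuous H11) (hc21 : Continuous H21) (hc31 : Continuous H31)
    (hc41 : Continuous H41)
    (hsym : ∀ t : ℝ, (H11 t)ᵀ = H11 t ∧ (H12 t)ᵀ = H21 t ∧ (H13 t)ᵀ = H31 t ∧
      (H14 t)ᵀ = H41 t ∧ (H22 t)ᵀ = H22 t ∧ (H23 t)ᵀ = H32 t ∧
      (H24 t)ᵀ = H42 t ∧ (H33 t)ᵀ = H33 t ∧ (H44 t)ᵀ = H44 t)
    (hmono : ∀ t : ℝ, t ≤ T → ∀ x y z θ : Fin n → ℝ,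
      -(((H11 t).mulVec x + (H12 t).mulVec y + (H13 t).mulVec z + (H14 t).mulVec θ) ⬝ᵥ x)
        + ((H21 t).mulVec x + (H22 t).mulVec y + (H23 t).mulVec z + (H24 t).mulVec θ) ⬝ᵥ y
        + ((H31 t).mulVec x + (H32 t).mulVec y + (H33 t).mulVec z) ⬝ᵥ z
        + ((H41 t).mulVec x + (H42 t).mulVec y + (H44 t).mulVec θ) ⬝ᵥ θ
        ≤ -β * (x ⬝ᵥ x + y ⬝ᵥ y + z ⬝ᵥ z + θ ⬝ᵥ θ))
    (K : ℝ → ℝ → Matrix (Fin n) (Fin n) ℝ) (tb : ℝ → EReal)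
    (htbT : ∀ ϱ : ℝ, tb ϱ < (T : EReal))
    (hterm : ∀ ϱ : ℝ, K ϱ T = 0)
    (hcont : ∀ ϱ : ℝ, ContinuousOn (K ϱ) {t : ℝ | tb ϱ < (t : EReal) ∧ t ≤ T})
    (hode : ∀ ϱ t : ℝ, tb ϱ < (t : EReal) → t < T →
      HasDerivAt (K ϱ)
        (-(Ric H11 H12 H13 H14 H21 H22 H23 H24 H31 H32 H33 H41 H42 H44 ϱ t (K ϱ t))) t)
    (hpsd : ∀ ϱ t : ℝ, tb ϱ < (t : EReal) → t ≤ T → (K ϱ t).PosSemidef)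
    (hblow : ∀ ϱ : ℝ, ⊥ < tb ϱ →
      Tendsto (fun t => ‖K ϱ t‖) (nhdsWithin (tb ϱ).toReal (Set.Ioi (tb ϱ).toReal)) atTop) :
    (∀ ϱ ∈ Set.Icc (0 : ℝ) 1, tb ϱ = ⊥) ∧
    ∃ C > (0 : ℝ), ∀ ϱ ∈ Set.Icc (0 : ℝ) 1, ∀ t ∈ Set.Icc (0 : ℝ) T,
      (K ϱ t).PosSemidef ∧ (C • (1 : Matrix (Fin n) (Fin n) ℝ) - K ϱ t).PosSemidef := by
  have hbdd : ∀ a : ℝ, ∃ B, ∀ ϱ ∈ Icc (0 : ℝ) 1, ∀ t ∈ Icc a T, tb ϱ < t →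
      trace (K ϱ t) ≤ B := by
    intro a
    obtain ⟨c, d, hc, hd, hRic⟩ := exists_trace_Ric_le hβ hc11 hc21 hc31 hc41
      (fun t => (hsym t).2.1) (fun t => (hsym t).2.2.1) (fun t => (hsym t).2.2.2.1)
      (fun t => (hsym t).2.2.2.2.2.1) (fun t => (hsym t).2.2.2.2.2.2.1) hmono a
    exact ⟨c * (T - a) * exp (d * (T - a)), fun ϱ hϱ t ht htb =>
      trace_le_of_hasDerivAt_neg hc hd ht.1 ht.2 htb (hcont ϱ) (hode ϱ) (hpsd ϱ) (hRic ϱ hϱ)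
        (hterm ϱ)⟩
  have hbot : ∀ ϱ ∈ Icc (0 : ℝ) 1, tb ϱ = ⊥ := fun ϱ hϱ =>
    eq_bot_of_forall_trace_le (htbT ϱ) (hpsd ϱ) (fun a => (hbdd a).imp fun B hB => hB ϱ hϱ)
      (hblow ϱ)
  obtain ⟨B, hB⟩ := hbdd 0
  refine ⟨hbot, max B 0 + 1, by positivity, fun ϱ hϱ t ht => ?_⟩
  have htb : tb ϱ < t := by rw [hbot ϱ hϱ]; exact EReal.bot_lt_coe t
  have hKt := hpsd ϱ t htb ht.2
  exact ⟨hKt, hKt.smul_one_sub_of_trace_le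
    ((hB ϱ hϱ t ht htb).trans (by linarith [le_max_left B 0]))⟩

/-- for `ϱ ∈ [0,1]` the Riccati equation has no blow-up
(`t_ϱ = −∞`) and the solution is uniformly bounded: `0 ≤ K_t(ϱ) ≤ C Iₙ` on `[0,T]`. -/
theorem stmt_6
    (T : ℝ) (hT : 0 < T) (n : ℕ) (hn : 1 ≤ n) (β : ℝ) (hβ : 0 < β)
    (H11 H12 H13 H14 H21 H22 H23 H24 H31 H32 H33 H41 H42 H44 :
      ℝ → Matrix (Fin n) (Fin n) ℝ)
    (hc11 : Continuous H11) (hc12 : Continuous H12) (hc13 : Continuous H13)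
    (hc14 : Continuous H14) (hc21 : Continuous H21) (hc22 : Continuous H22)
    (hc23 : Continuous H23) (hc24 : Continuous H24) (hc31 : Continuous H31)
    (hc32 : Continuous H32) (hc33 : Continuous H33) (hc41 : Continuous H41)
    (hc42 : Continuous H42) (hc44 : Continuous H44)
    (hsym : ∀ t : ℝ, (H11 t)ᵀ = H11 t ∧ (H12 t)ᵀ = H21 t ∧ (H13 t)ᵀ = H31 t ∧
      (H14 t)ᵀ = H41 t ∧ (H22 t)ᵀ = H22 t ∧ (H23 t)ᵀ = H32 t ∧
      (H24 t)ᵀ = H42 t ∧ (H33 t)ᵀ = H33 t ∧ (H44 t)ᵀ = H44 t)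
    (hconst : ∀ t : ℝ, t ≤ 0 → H11 t = H11 0 ∧ H12 t = H12 0 ∧ H13 t = H13 0 ∧
      H14 t = H14 0 ∧ H21 t = H21 0 ∧ H22 t = H22 0 ∧ H23 t = H23 0 ∧
      H24 t = H24 0 ∧ H31 t = H31 0 ∧ H32 t = H32 0 ∧ H33 t = H33 0 ∧
      H41 t = H41 0 ∧ H42 t = H42 0 ∧ H44 t = H44 0)
    (hmono : ∀ t : ℝ, t ≤ T → ∀ x y z θ : Fin n → ℝ,
      -(((H11 t).mulVec x + (H12 t).mulVec y + (H13 t).mulVec z + (H14 t).mulVec θ) ⬝ᵥ x)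
        + ((H21 t).mulVec x + (H22 t).mulVec y + (H23 t).mulVec z + (H24 t).mulVec θ) ⬝ᵥ y
        + ((H31 t).mulVec x + (H32 t).mulVec y + (H33 t).mulVec z) ⬝ᵥ z
        + ((H41 t).mulVec x + (H42 t).mulVec y + (H44 t).mulVec θ) ⬝ᵥ θ
        ≤ -β * (x ⬝ᵥ x + y ⬝ᵥ y + z ⬝ᵥ z + θ ⬝ᵥ θ))
    (K : ℝ → ℝ → Matrix (Fin n) (Fin n) ℝ) (tb : ℝ → EReal)
    (htbT : ∀ ϱ : ℝ, tb ϱ < (T : EReal))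
    (hterm : ∀ ϱ : ℝ, K ϱ T = 0)
    (hcont : ∀ ϱ : ℝ, ContinuousOn (K ϱ) {t : ℝ | tb ϱ < (t : EReal) ∧ t ≤ T})
    (hode : ∀ ϱ t : ℝ, tb ϱ < (t : EReal) → t < T →
      HasDerivAt (K ϱ)
        (-(Ric H11 H12 H13 H14 H21 H22 H23 H24 H31 H32 H33 H41 H42 H44 ϱ t (K ϱ t))) t)
    (hpsd : ∀ ϱ t : ℝ, tb ϱ < (t : EReal) → t ≤ T → (K ϱ t).PosSemidef)
    (hblow : ∀ ϱ : ℝ, ⊥ < tb ϱ →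
      Tendsto (fun t => ‖K ϱ t‖) (nhdsWithin (tb ϱ).toReal (Set.Ioi (tb ϱ).toReal)) atTop) :
    (∀ ϱ ∈ Set.Icc (0 : ℝ) 1, tb ϱ = ⊥) ∧
    ∃ C > (0 : ℝ), ∀ ϱ ∈ Set.Icc (0 : ℝ) 1, ∀ t ∈ Set.Icc (0 : ℝ) T,
      (K ϱ t).PosSemidef ∧ (C • (1 : Matrix (Fin n) (Fin n) ℝ) - K ϱ t).PosSemidef :=
  stmt_6_general T n β hβ H11 H12 H13 H14 H21 H22 H23 H24 H31 H32 H33 H41 H42 H44 hc11 hc21 hc31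
    hc41 hsym hmono K tb htbT hterm hcont hode hpsd hblow
end

section
/- The blow-up time of the scalar Riccati equation is nondecreasing in the parameter: for ρ₁ ≤ ρ₂ one has t^k_{ρ₁} ≤ t^k_{ρ₂}. Moreover lim_{ρ → +∞} t^k_ρ = T, i.e. for every t̃ < T there exists ρ̃ such that t^k_ρ > t̃ for all ρ > ρ̃. -/
open Filter Set

/-- Right-hand side of the scalar Riccati equation `−k̇ = ricS ρ t k`. -/
noncomputable def ricS (H11 H13 H14 H21 H22 H33 H44 Hb22 : ℝ → ℝ)
    (ρ t k : ℝ) : ℝ :=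
  (2 * H21 t + (H13 t) ^ 2 + (H14 t) ^ 2) * k + H11 t
    + (H22 t - ρ * Hb22 t - H33 t * (H13 t) ^ 2 - H44 t * (H14 t) ^ 2) * k ^ 2

/-!
Write the equation as `−k̇ = a k + h + c_ρ k²` with `c_ρ = c₀ − ρ H̄₂₂`, which increases with `ρ`.
A solution, and the difference of two solutions, satisfy linear backward equations
`−v̇ = φ v + ψ` with `ψ ≥ 0` and `v T = 0`; the integrating factor `exp ∫ φ` shows `v ≥ 0`.
Hence `k_ρ ≥ 0` and `k_{ρ₁} ≤ k_{ρ₂}` wherever both exist, so if `t_{ρ₂} < t_{ρ₁}` then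
`k_{ρ₂} ≥ k_{ρ₁} → +∞` at `t_{ρ₁}`, contradicting continuity of `k_{ρ₂}` there.

For large `ρ`, completing the square on a compact interval `[t₀, T]` gives
`−k̇ ≥ β/2 + (2C²/β) k²`, so `arctan (2C k / β)` decreases at rate at least `C`; as it starts
at `0` at time `T` and stays below `π/2`, a solution on `[t₀, T]` forces `C (T − t₀) < π/2`.
Taking `t₀` midway between `t'` and `T` and `C = π / (T − t')` excludes `t_ρ ≤ t'`.
-/

open Real

theorem exists_hasDerivAt_of_continuousOn_Icc {φ : ℝ → ℝ} {a b : ℝ} (hab : a ≤ b)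
    (hφ : ContinuousOn φ (Icc a b)) :
    ∃ F : ℝ → ℝ, ContinuousOn F (Icc a b) ∧ ∀ t ∈ Ioo a b, HasDerivAt F (φ t) t := by
  refine ⟨fun t => ∫ s in a..t, φ s, ?_, fun t ht => ?_⟩
  · have hint : MeasureTheory.IntegrableOn φ (uIcc a b) := by
      simpa only [uIcc_of_le hab] using hφ.integrableOn_Icc
    simpa only [uIcc_of_le hab] using intervalIntegral.continuousOn_primitive_interval hint
  · exact intervalIntegral.integral_hasDerivAt_right
      ((hφ.mono (Icc_subset_Icc le_rfl ht.2.le)).intervalIntegrable_of_Icc ht.1.le)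
      ((hφ.mono Ioo_subset_Icc_self).stronglyMeasurableAtFilter isOpen_Ioo t ht)
      (hφ.continuousAt (Icc_mem_nhds ht.1 ht.2))

theorem nonneg_of_hasDerivAt_eq_neg_linear {v φ ψ : ℝ → ℝ} {a b : ℝ} (hab : a ≤ b)
    (hv : ContinuousOn v (Icc a b)) (hφ : ContinuousOn φ (Icc a b))
    (hv' : ∀ t ∈ Ioo a b, HasDerivAt v (-(φ t * v t + ψ t)) t)
    (hψ : ∀ t ∈ Ioo a b, 0 ≤ ψ t) (hb : 0 ≤ v b) : 0 ≤ v a := by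
  obtain ⟨F, hF, hF'⟩ := exists_hasDerivAt_of_continuousOn_Icc hab hφ
  have hanti : AntitoneOn (fun t => v t * exp (F t)) (Icc a b) := by
    refine antitoneOn_of_hasDerivWithinAt_nonpos (convex_Icc a b) (hv.mul hF.rexp)
      (f' := fun t => -(ψ t * exp (F t))) ?_ ?_ <;> rw [interior_Icc] <;> intro t ht
    · exact (((hv' t ht).mul (hF' t ht).exp).congr_deriv (by ring)).hasDerivWithinAt
    · exact neg_nonpos.2 (mul_nonneg (hψ t ht) (exp_pos _).le)
  have hba : v b * exp (F b) ≤ v a * exp (F a) :=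
    hanti (left_mem_Icc.2 hab) (right_mem_Icc.2 hab) hab
  exact nonneg_of_mul_nonneg_left ((mul_nonneg hb (exp_pos _).le).trans hba) (exp_pos _)

-- `ℓ tan (C (T - t))` solves `f' = -(C / ℓ) (ℓ² + f²)` and blows up after time `π / (2C)`.
theorem mul_sub_lt_pi_div_two_of_riccati_ineq {f f' : ℝ → ℝ} {t₀ T C ℓ : ℝ} (hℓ : 0 < ℓ)
    (ht₀ : t₀ < T) (hf : ContinuousOn f (Icc t₀ T))
    (hf' : ∀ t ∈ Ioo t₀ T, HasDerivAt f (f' t) t)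
    (hineq : ∀ t ∈ Ioo t₀ T, f' t ≤ -(C / ℓ * (ℓ ^ 2 + f t ^ 2))) (hT : f T = 0) :
    C * (T - t₀) < π / 2 := by
  set θ : ℝ → ℝ := fun t => arctan (f t / ℓ)
  have hθ' : ∀ t ∈ Ioo t₀ T, HasDerivAt θ (1 / (1 + (f t / ℓ) ^ 2) * (f' t / ℓ)) t :=
    fun t ht => ((hf' t ht).div_const ℓ).arctan
  obtain ⟨ξ, hξ, hslope⟩ := exists_hasDerivAt_eq_slope θ _ ht₀
    (continuous_arctan.comp_continuousOn (hf.div_const ℓ)) hθ'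
  have hθ'_le : 1 / (1 + (f ξ / ℓ) ^ 2) * (f' ξ / ℓ) ≤ -C := by
    have hpos : 0 < ℓ ^ 2 + f ξ ^ 2 := by positivity
    have hrw : 1 / (1 + (f ξ / ℓ) ^ 2) * (f' ξ / ℓ) = ℓ * f' ξ / (ℓ ^ 2 + f ξ ^ 2) := by
      field_simp
    rw [hrw, div_le_iff₀ hpos]
    have := mul_le_mul_of_nonneg_left (hineq ξ hξ) hℓ.le
    field_simp at this ⊢
    linarith
  have hθT : θ T = 0 := by simp [θ, hT]
  rw [hslope, hθT, div_le_iff₀ (sub_pos.2 ht₀)] at hθ'_le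
  linarith [arctan_lt_pi_div_two (f t₀ / ℓ)]

theorem half_add_mul_sq_le_of_abs_le {a h c x A β q : ℝ} (hβ : 0 < β) (ha : |a| ≤ A)
    (hh : β ≤ h) (hc : q + A ^ 2 / (2 * β) ≤ c) : β / 2 + q * x ^ 2 ≤ a * x + h + c * x ^ 2 := by
  have hax : -(A * |x|) ≤ a * x := by
    have := neg_abs_le (a * x)
    rw [abs_mul] at this
    nlinarith [abs_nonneg x]
  have hsq : 0 ≤ A ^ 2 / (2 * β) * x ^ 2 - A * |x| + β / 2 := by
    have : A ^ 2 / (2 * β) * x ^ 2 - A * |x| + β / 2 = (A * |x| - β) ^ 2 / (2 * β) := by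
      rw [← sq_abs x]; field_simp; ring
    rw [this]; positivity
  nlinarith [mul_le_mul_of_nonneg_right hc (sq_nonneg x)]

theorem IsCompact.exists_forall_le_sub_mul {K : Set ℝ} (hK : IsCompact K) {g u : ℝ → ℝ}
    (hg : ContinuousOn g K) (hu : ContinuousOn u K) (hneg : ∀ t ∈ K, u t < 0) (L : ℝ) :
    ∃ ρ₀, ∀ ρ, ρ₀ < ρ → ∀ t ∈ K, L ≤ g t - ρ * u t := by
  obtain ⟨ε, hε, hεu⟩ := hK.exists_forall_le' hu.neg (a := 0) fun t ht => neg_pos.2 (hneg t ht)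
  obtain ⟨m, hm⟩ := hK.bddBelow_image hg
  refine ⟨max 0 ((L - m) / ε), fun ρ hρ t ht => ?_⟩
  have hρ₀ : 0 ≤ ρ := (le_max_left _ _).trans hρ.le
  have hLm : L - m < ρ * ε := (div_lt_iff₀ hε).1 ((le_max_right _ _).trans_lt hρ)
  have hεt : ε ≤ -u t := hεu t ht
  nlinarith [hm (mem_image_of_mem g ht), mul_le_mul_of_nonneg_left hεt hρ₀]

structure IsRiccatiSolution (a h c : ℝ → ℝ) (T : ℝ) (tb : EReal) (k : ℝ → ℝ) : Prop where
  terminal : k T = 0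
  continuousOn : ContinuousOn k {t : ℝ | tb < t ∧ t ≤ T}
  hasDerivAt : ∀ t : ℝ, tb < t → t < T → HasDerivAt k (-(a t * k t + h t + c t * k t ^ 2)) t

namespace IsRiccatiSolution

variable {a h c c₁ c₂ k k₁ k₂ : ℝ → ℝ} {T t₀ : ℝ} {tb tb₁ tb₂ : EReal}

theorem continuousOn_Icc (hk : IsRiccatiSolution a h c T tb k) (ht₀ : tb < t₀) :
    ContinuousOn k (Icc t₀ T) :=
  hk.continuousOn.mono fun _ ht => ⟨ht₀.trans_le (EReal.coe_le_coe_iff.2 ht.1), ht.2⟩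

theorem hasDerivAt_of_mem_Ioo (hk : IsRiccatiSolution a h c T tb k) (ht₀ : tb < t₀) :
    ∀ t ∈ Ioo t₀ T, HasDerivAt k (-(a t * k t + h t + c t * k t ^ 2)) t :=
  fun t ht => hk.hasDerivAt t (ht₀.trans (EReal.coe_lt_coe_iff.2 ht.1)) ht.2

theorem nonneg (hk : IsRiccatiSolution a h c T tb k) (ha : Continuous a) (hc : Continuous c)
    (hh : ∀ t < T, 0 ≤ h t) {t : ℝ} (htb : tb < t) (htT : t ≤ T) : 0 ≤ k t :=
  nonneg_of_hasDerivAt_eq_neg_linear (φ := fun s => a s + c s * k s) htT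
    (hk.continuousOn_Icc htb)
    (ha.continuousOn.add (hc.continuousOn.mul (hk.continuousOn_Icc htb)))
    (fun s hs => (hk.hasDerivAt_of_mem_Ioo htb s hs).congr_deriv (by ring))
    (fun s hs => hh s hs.2) hk.terminal.ge

theorem le_of_le (hk₁ : IsRiccatiSolution a h c₁ T tb₁ k₁)
    (hk₂ : IsRiccatiSolution a h c₂ T tb₂ k₂) (ha : Continuous a) (hc₁ : Continuous c₁)
    (hc : ∀ t < T, c₁ t ≤ c₂ t) {t : ℝ} (ht₁ : tb₁ < t) (ht₂ : tb₂ < t) (htT : t ≤ T) :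
    k₁ t ≤ k₂ t :=
  sub_nonneg.1 <| nonneg_of_hasDerivAt_eq_neg_linear (v := fun s => k₂ s - k₁ s)
    (φ := fun s => a s + c₁ s * (k₂ s + k₁ s)) (ψ := fun s => (c₂ s - c₁ s) * k₂ s ^ 2) htT
    ((hk₂.continuousOn_Icc ht₂).sub (hk₁.continuousOn_Icc ht₁))
    (ha.continuousOn.add (hc₁.continuousOn.mul
      ((hk₂.continuousOn_Icc ht₂).add (hk₁.continuousOn_Icc ht₁))))
    (fun s hs => ((hk₂.hasDerivAt_of_mem_Ioo ht₂ s hs).sub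
      (hk₁.hasDerivAt_of_mem_Ioo ht₁ s hs)).congr_deriv (by ring))
    (fun s hs => mul_nonneg (sub_nonneg.2 (hc s hs.2)) (sq_nonneg _))
    (by simp [hk₁.terminal, hk₂.terminal])

theorem blowupTime_le (hk₁ : IsRiccatiSolution a h c₁ T tb₁ k₁)
    (hk₂ : IsRiccatiSolution a h c₂ T tb₂ k₂) (ha : Continuous a) (hc₁ : Continuous c₁)
    (hc : ∀ t < T, c₁ t ≤ c₂ t) (hh : ∀ t < T, 0 ≤ h t) (htb₁ : tb₁ < T)
    (hblow : ⊥ < tb₁ →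
      Tendsto (fun t => |k₁ t|) (nhdsWithin tb₁.toReal (Ioi tb₁.toReal)) atTop) :
    tb₁ ≤ tb₂ := by
  by_contra! hlt
  have hbot : ⊥ < tb₁ := bot_le.trans_lt hlt
  set t₁ := tb₁.toReal
  have hcoe : (t₁ : EReal) = tb₁ := EReal.coe_toReal htb₁.ne_top hbot.ne'
  have ht₁T : t₁ < T := EReal.coe_lt_coe_iff.1 (hcoe ▸ htb₁)
  have hdom : ∀ᶠ t in nhdsWithin t₁ (Ioi t₁), |k₁ t| ≤ k₂ t := by
    filter_upwards [Ioo_mem_nhdsGT ht₁T] with t ht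
    have h₁ : tb₁ < t := hcoe ▸ EReal.coe_lt_coe_iff.2 ht.1
    rw [abs_of_nonneg (hk₁.nonneg ha hc₁ hh h₁ ht.2.le)]
    exact hk₁.le_of_le hk₂ ha hc₁ hc h₁ (hlt.trans h₁) ht.2.le
  have hk₂t₁ : Tendsto k₂ (nhdsWithin t₁ (Ioi t₁)) (nhds (k₂ t₁)) :=
    ((hk₂.continuousOn_Icc (hcoe ▸ hlt)) t₁ (left_mem_Icc.2 ht₁T.le)).mono_of_mem_nhdsWithin
      (mem_of_superset (Ioo_mem_nhdsGT ht₁T) Ioo_subset_Icc_self) |>.tendsto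
  exact not_tendsto_atTop_of_tendsto_nhds hk₂t₁ (tendsto_atTop_mono' _ hdom (hblow hbot))

theorem mul_sub_lt_pi_div_two (hk : IsRiccatiSolution a h c T tb k) {A β C : ℝ} (hβ : 0 < β)
    (hC : 0 < C) (ht₀ : tb < t₀) (ht₀T : t₀ < T) (ha : ∀ t ∈ Icc t₀ T, |a t| ≤ A)
    (hh : ∀ t ∈ Icc t₀ T, β ≤ h t)
    (hc : ∀ t ∈ Icc t₀ T, 2 * C ^ 2 / β + A ^ 2 / (2 * β) ≤ c t) :
    C * (T - t₀) < π / 2 := by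
  refine mul_sub_lt_pi_div_two_of_riccati_ineq (ℓ := β / (2 * C)) (by positivity) ht₀T
    (hk.continuousOn_Icc ht₀) (hk.hasDerivAt_of_mem_Ioo ht₀) (fun t ht => ?_) hk.terminal
  have hscale : C / (β / (2 * C)) * ((β / (2 * C)) ^ 2 + k t ^ 2)
      = β / 2 + 2 * C ^ 2 / β * k t ^ 2 := by
    field_simp
  rw [hscale, neg_le_neg_iff]
  have ht' := Ioo_subset_Icc_self ht
  exact half_add_mul_sq_le_of_abs_le hβ (ha t ht') (hh t ht') (hc t ht')

end IsRiccatiSolution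

theorem stmt_14_general
    (T β : ℝ) (hβ : 0 < β)
    (H11 H13 H14 H21 H22 H33 H44 Hb22 : ℝ → ℝ)
    (hc13 : Continuous H13)
    (hc14 : Continuous H14) (hc21 : Continuous H21) (hc22 : Continuous H22)
    (hc33 : Continuous H33) (hc44 : Continuous H44) (hcb22 : Continuous Hb22)
    (hbound : ∀ t : ℝ, t ≤ T → β ≤ H11 t ∧ H22 t ≤ -β ∧ H33 t ≤ -β ∧
      H44 t ≤ -β ∧ Hb22 t < 0)
    (k : ℝ → ℝ → ℝ) (tb : ℝ → EReal)
    (htbT : ∀ ρ : ℝ, tb ρ < (T : EReal))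
    (hterm : ∀ ρ : ℝ, k ρ T = 0)
    (hcont : ∀ ρ : ℝ, ContinuousOn (k ρ) {t : ℝ | tb ρ < (t : EReal) ∧ t ≤ T})
    (hode : ∀ ρ t : ℝ, tb ρ < (t : EReal) → t < T →
      HasDerivAt (k ρ) (-(ricS H11 H13 H14 H21 H22 H33 H44 Hb22 ρ t (k ρ t))) t)
    (hblow : ∀ ρ : ℝ, ⊥ < tb ρ →
      Tendsto (fun t => |k ρ t|) (nhdsWithin (tb ρ).toReal (Set.Ioi (tb ρ).toReal)) atTop) :
    (∀ ρ₁ ρ₂ : ℝ, ρ₁ ≤ ρ₂ → tb ρ₁ ≤ tb ρ₂) ∧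
    ∀ t' : ℝ, t' < T → ∃ ρ' : ℝ, ∀ ρ : ℝ, ρ' < ρ → (t' : EReal) < tb ρ := by
  set a : ℝ → ℝ := fun t => 2 * H21 t + H13 t ^ 2 + H14 t ^ 2
  set c : ℝ → ℝ → ℝ := fun ρ t => H22 t - ρ * Hb22 t - H33 t * H13 t ^ 2 - H44 t * H14 t ^ 2
  have ha : Continuous a := by fun_prop
  have hc : ∀ ρ, Continuous (c ρ) := fun ρ => by fun_prop
  have hsol : ∀ ρ, IsRiccatiSolution a H11 (c ρ) T (tb ρ) (k ρ) :=
    fun ρ => ⟨hterm ρ, hcont ρ, hode ρ⟩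
  refine ⟨fun ρ₁ ρ₂ hρ => (hsol ρ₁).blowupTime_le (hsol ρ₂) ha (hc ρ₁) (fun t ht => ?_)
    (fun t ht => hβ.le.trans (hbound t ht.le).1) (htbT ρ₁) (hblow ρ₁), fun t' ht' => ?_⟩
  · nlinarith [(hbound t ht.le).2.2.2.2]
  set t₀ := (t' + T) / 2 with ht₀
  set C := π / (T - t') with hC
  obtain ⟨A, hA⟩ :=
    isCompact_Icc.exists_bound_of_continuousOn (s := Icc t₀ T) ha.continuousOn
  obtain ⟨ρ₀, hρ₀⟩ := isCompact_Icc.exists_forall_le_sub_mul (hc 0).continuousOn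
    hcb22.continuousOn (fun t ht => (hbound t ht.2).2.2.2.2) (2 * C ^ 2 / β + A ^ 2 / (2 * β))
  refine ⟨ρ₀, fun ρ hρ => ?_⟩
  by_contra! htb
  have hlt := (hsol ρ).mul_sub_lt_pi_div_two hβ (div_pos pi_pos (sub_pos.2 ht'))
    (htb.trans_lt (EReal.coe_lt_coe_iff.2 (by linarith))) (by linarith) hA
    (fun t ht => (hbound t ht.2).1) (fun t ht => (hρ₀ ρ hρ t ht).trans_eq (by ring))
  have hCT : C * (T - t₀) = π / 2 := by
    have hne : T - t' ≠ 0 := (sub_pos.2 ht').ne'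
    rw [hC, ht₀]; field_simp; ring
  linarith

/-- the blow-up time of the scalar Riccati equation is
nondecreasing in `ρ`, and `t^k_ρ → T` as `ρ → +∞`. -/
theorem stmt_14
    (T β : ℝ) (hT : 0 < T) (hβ : 0 < β)
    (H11 H12 H13 H14 H21 H22 H33 H44 Hb22 : ℝ → ℝ)
    (hc11 : Continuous H11) (hc12 : Continuous H12) (hc13 : Continuous H13)
    (hc14 : Continuous H14) (hc21 : Continuous H21) (hc22 : Continuous H22)
    (hc33 : Continuous H33) (hc44 : Continuous H44) (hcb22 : Continuous Hb22)
    (hconst : ∀ t : ℝ, t ≤ 0 → H11 t = H11 0 ∧ H12 t = H12 0 ∧ H13 t = H13 0 ∧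
      H14 t = H14 0 ∧ H21 t = H21 0 ∧ H22 t = H22 0 ∧ H33 t = H33 0 ∧
      H44 t = H44 0 ∧ Hb22 t = Hb22 0)
    (hbound : ∀ t : ℝ, t ≤ T → β ≤ H11 t ∧ H22 t ≤ -β ∧ H33 t ≤ -β ∧
      H44 t ≤ -β ∧ Hb22 t < 0)
    (k : ℝ → ℝ → ℝ) (tb : ℝ → EReal)
    (htbT : ∀ ρ : ℝ, tb ρ < (T : EReal))
    (hterm : ∀ ρ : ℝ, k ρ T = 0)
    (hcont : ∀ ρ : ℝ, ContinuousOn (k ρ) {t : ℝ | tb ρ < (t : EReal) ∧ t ≤ T})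
    (hode : ∀ ρ t : ℝ, tb ρ < (t : EReal) → t < T →
      HasDerivAt (k ρ) (-(ricS H11 H13 H14 H21 H22 H33 H44 Hb22 ρ t (k ρ t))) t)
    (hblow : ∀ ρ : ℝ, ⊥ < tb ρ →
      Tendsto (fun t => |k ρ t|) (nhdsWithin (tb ρ).toReal (Set.Ioi (tb ρ).toReal)) atTop) :
    (∀ ρ₁ ρ₂ : ℝ, ρ₁ ≤ ρ₂ → tb ρ₁ ≤ tb ρ₂) ∧
    ∀ t' : ℝ, t' < T → ∃ ρ' : ℝ, ∀ ρ : ℝ, ρ' < ρ → (t' : EReal) < tb ρ :=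
  stmt_14_general T β hβ H11 H13 H14 H21 H22 H33 H44 Hb22 hc13 hc14 hc21 hc22 hc33 hc44 hcb22 hbound
    k tb htbT hterm hcont hode hblow
end

section
/- Assume in addition (Assumption (H5)): 4·‖H₁₁‖_∞ · ‖H₂₂ − ρ_b·H̄₂₂ − H₃₃H₁₃² − H₄₄H₁₄²‖_∞ ≤ ‖2H₂₁ + H₁₃² + H₁₄²‖_∞² < 4/T², where ‖·‖_∞ denotes the supremum norm over [0, T]. Then the blow-up time at ρ_b satisfies t^k_{ρ_b} < 0, so the solution k_·(ρ_b) exists on all of [0, T]; and for every ρ ∈ (0, ρ_b], the solution k_·(ρ) exists on all of [0, T] and satisfies 0 ≤ k_t(ρ) ≤ k_t(ρ_b) for all t ∈ [0, T]. -/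
open Filter Set Topology

/-!
Everything rests on a comparison principle for the backward Riccati equation
`−k̇ = P k + R + Q k²`: if `f` is a subsolution and `g` a supersolution with `f T ≤ g T`, then
`f ≤ g`. Comparing `k(ρ)` with `0` (as `H₁₁ > 0`) gives `k(ρ) ≥ 0`. Since `H̄₂₂ < 0`, the
coefficient of `k²` increases with `ρ`, so `k(ρ)` is a subsolution of the `ρ_b`-equation and
`k(ρ) ≤ k(ρ_b)`. Finally, with `A`, `B`, `C` the sup norms of the coefficients at `ρ_b`, (H5) says
`4 B C ≤ A²` and `A T < 2`, which makes `B (T - t) / (1 - A (T - t) / 2)` a supersolution that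
stays bounded on `[0, T]`; so `k(ρ)` stays bounded on `[0, T]` and cannot blow up there.
-/

theorem nonpos_of_hasDerivAt_nonneg_of_pos {u u' : ℝ → ℝ} {a b : ℝ}
    (hu : ContinuousOn u (Icc a b)) (hu' : ∀ t ∈ Ioo a b, HasDerivAt u (u' t) t)
    (hpos : ∀ t ∈ Ioo a b, 0 < u t → 0 ≤ u' t) (hb : u b ≤ 0) :
    ∀ t ∈ Icc a b, u t ≤ 0 := by
  intro t₁ ht₁
  by_contra! hu₁
  set S := Icc t₁ b ∩ u ⁻¹' Iic 0
  have hS : IsClosed S :=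
    (hu.mono (Icc_subset_Icc_left ht₁.1)).preimage_isClosed_of_isClosed isClosed_Icc isClosed_Iic
  have hSbdd : BddBelow S := ⟨t₁, fun t ht => ht.1.1⟩
  obtain ⟨⟨ht₁₂, ht₂b⟩, hu₂⟩ := hS.csInf_mem ⟨b, ⟨ht₁.2, le_rfl⟩, hb⟩ hSbdd
  set t₂ := sInf S
  have hpos_before : ∀ t ∈ Ico t₁ t₂, 0 < u t := fun t ht => by
    by_contra! h
    exact ht.2.not_ge (csInf_le hSbdd ⟨⟨ht.1, ht.2.le.trans ht₂b⟩, h⟩)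
  have hmono : MonotoneOn u (Icc t₁ t₂) := by
    refine monotoneOn_of_hasDerivWithinAt_nonneg (f' := u') (convex_Icc _ _)
      (hu.mono (Icc_subset_Icc ht₁.1 ht₂b)) (fun t ht => ?_) (fun t ht => ?_) <;>
      rw [interior_Icc] at ht
    · exact (hu' t ⟨ht₁.1.trans_lt ht.1, ht.2.trans_le ht₂b⟩).hasDerivWithinAt
    · exact hpos t ⟨ht₁.1.trans_lt ht.1, ht.2.trans_le ht₂b⟩ (hpos_before t ⟨ht.1.le, ht.2⟩)
  have := hmono ⟨le_rfl, ht₁₂⟩ ⟨ht₁₂, le_rfl⟩ ht₁₂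
  exact (hu₁.trans_le this).not_ge hu₂

theorem riccati_backward_comparison {t₀ T : ℝ} {p q r f g f' g' : ℝ → ℝ}
    (hp : ContinuousOn p (Icc t₀ T)) (hq : ContinuousOn q (Icc t₀ T))
    (hf : ContinuousOn f (Icc t₀ T)) (hg : ContinuousOn g (Icc t₀ T))
    (hf' : ∀ t ∈ Ioo t₀ T, HasDerivAt f (f' t) t) (hg' : ∀ t ∈ Ioo t₀ T, HasDerivAt g (g' t) t)
    (hf_sub : ∀ t ∈ Ioo t₀ T, -f' t ≤ p t * f t + r t + q t * f t ^ 2)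
    (hg_super : ∀ t ∈ Ioo t₀ T, p t * g t + r t + q t * g t ^ 2 ≤ -g' t)
    (hT : f T ≤ g T) : ∀ t ∈ Icc t₀ T, f t ≤ g t := by
  obtain ⟨L, hL⟩ := isCompact_Icc.bddAbove_image (hp.add (hq.mul (hf.add hg)))
  have hL' : ∀ t ∈ Icc t₀ T, p t + q t * (f t + g t) ≤ L := fun t ht => hL (mem_image_of_mem _ ht)
  -- `-(f - g)' ≤ L (f - g)` where `f > g`, so `(f - g) e^{L t}` is nondecreasing there
  have key := nonpos_of_hasDerivAt_nonneg_of_pos (u := fun t => (f t - g t) * Real.exp (L * t))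
    (u' := fun t => (f' t - g' t + L * (f t - g t)) * Real.exp (L * t))
    ((hf.sub hg).mul (by fun_prop))
    (fun t ht => by
      refine (((hf' t ht).sub (hg' t ht)).mul
        (((hasDerivAt_id t).const_mul L).exp)).congr_deriv ?_
      simp only [Pi.sub_apply, id, mul_one]
      ring)
    (fun t ht hpos => by
      have hfg : 0 < f t - g t := pos_of_mul_pos_left hpos (Real.exp_pos _).le
      have hc := mul_le_mul_of_nonneg_left (hL' t (Ioo_subset_Icc_self ht)) hfg.le
      have := hf_sub t ht
      have := hg_super t ht
      have : 0 ≤ f' t - g' t + L * (f t - g t) := by nlinarith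
      positivity)
    (by simpa using mul_nonpos_of_nonpos_of_nonneg (sub_nonpos.2 hT) (Real.exp_pos (L * T)).le)
  intro t ht
  exact sub_nonpos.1 (nonpos_of_mul_nonpos_left (key t ht) (Real.exp_pos _))

-- In the reversed time `s = T - t`, the solution of `y' = A y + B + (A² / 4B) y²`, `y 0 = 0`.
noncomputable def riccatiBarrier (A B T t : ℝ) : ℝ := B * (T - t) / (1 - A * (T - t) / 2)

section RiccatiBarrier

variable {A B C T t : ℝ}

theorem hasDerivAt_riccatiBarrier (hD : 1 - A * (T - t) / 2 ≠ 0) :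
    HasDerivAt (riccatiBarrier A B T) (-(B / (1 - A * (T - t) / 2) ^ 2)) t := by
  have hnum : HasDerivAt (fun u => B * (T - u)) (-B) t :=
    (((hasDerivAt_id' t).const_sub T).const_mul B).congr_deriv (by ring)
  have hden : HasDerivAt (fun u => 1 - A * (T - u) / 2) (A / 2) t :=
    ((((hasDerivAt_id' t).const_sub T).const_mul A).div_const 2).const_sub 1 |>.congr_deriv
      (by ring)
  refine (hnum.div hden hD).congr_deriv ?_
  field_simp
  ring

theorem riccatiBarrier_supersolution (hB : 0 ≤ B) (hABC : 4 * B * C ≤ A ^ 2)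
    (hD : 0 < 1 - A * (T - t) / 2) :
    A * riccatiBarrier A B T t + B + C * riccatiBarrier A B T t ^ 2
      ≤ B / (1 - A * (T - t) / 2) ^ 2 := by
  set D := 1 - A * (T - t) / 2
  set φ := riccatiBarrier A B T t
  have hφ : φ * D = B * (T - t) := div_mul_cancel₀ _ hD.ne'
  rw [le_div_iff₀ (by positivity),
    show (A * φ + B + C * φ ^ 2) * D ^ 2 = A * (φ * D) * D + B * D ^ 2 + C * (φ * D) ^ 2 by ring,
    hφ, show A * (B * (T - t)) * D + B * D ^ 2 + C * (B * (T - t)) ^ 2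
      = B - B * (T - t) ^ 2 * (A ^ 2 - 4 * B * C) / 4 by simp only [D]; ring]
  nlinarith [mul_nonneg (mul_nonneg hB (sq_nonneg (T - t))) (sub_nonneg.2 hABC)]

theorem riccatiBarrier_le (hB : 0 ≤ B) (hAT : A * T < 2) (hD : 0 < 1 - A * (T - t) / 2)
    (ht : 0 ≤ t) : riccatiBarrier A B T t ≤ B * T / (1 - A * T / 2) := by
  unfold riccatiBarrier
  rw [div_le_div_iff₀ hD (by linarith)]
  nlinarith [mul_nonneg hB ht]

end RiccatiBarrier

theorem lt_of_abs_le_of_tendsto_abs_atTop {k : ℝ → ℝ} {tb : EReal} {t₀ T M : ℝ}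
    (htbT : tb < T) (hblow : ⊥ < tb → Tendsto (fun t => |k t|) (𝓝[>] tb.toReal) atTop)
    (hbdd : ∀ t : ℝ, tb < t → t₀ ≤ t → t ≤ T → |k t| ≤ M) : tb < t₀ := by
  induction tb using EReal.rec with
  | bot => exact EReal.bot_lt_coe t₀
  | top => exact absurd htbT (not_lt.2 le_top)
  | coe r =>
    rw [EReal.coe_lt_coe_iff] at htbT ⊢
    by_contra! hr
    have hlarge := (hblow (EReal.bot_lt_coe r)).eventually_gt_atTop M
    rw [EReal.toReal_coe] at hlarge
    have hbelow : ∀ᶠ t in 𝓝[>] r, t < T := mem_nhdsWithin_of_mem_nhds (Iio_mem_nhds htbT)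
    obtain ⟨t, hMt, htT, hrt⟩ := (hlarge.and (hbelow.and self_mem_nhdsWithin)).exists
    exact hMt.not_ge (hbdd t (EReal.coe_lt_coe_iff.2 hrt) (hr.trans hrt.le) (le_of_lt htT))

section BackwardRiccati

variable {P R Q k : ℝ → ℝ} {t₀ T : ℝ}

theorem riccati_Icc_of_lt {tb : EReal} (hk : ContinuousOn k {t : ℝ | tb < t ∧ t ≤ T})
    (hode : ∀ t : ℝ, tb < t → t < T → HasDerivAt k (-(P t * k t + R t + Q t * k t ^ 2)) t)
    (ht₀ : tb < t₀) : ContinuousOn k (Icc t₀ T) ∧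
      ∀ t ∈ Ioo t₀ T, HasDerivAt k (-(P t * k t + R t + Q t * k t ^ 2)) t :=
  ⟨hk.mono fun _ ht => ⟨ht₀.trans_le (EReal.coe_le_coe_iff.2 ht.1), ht.2⟩,
    fun t ht => hode t (ht₀.trans (EReal.coe_lt_coe_iff.2 ht.1)) ht.2⟩

theorem riccati_nonneg (hP : ContinuousOn P (Icc t₀ T)) (hQ : ContinuousOn Q (Icc t₀ T))
    (hk : ContinuousOn k (Icc t₀ T))
    (hode : ∀ t ∈ Ioo t₀ T, HasDerivAt k (-(P t * k t + R t + Q t * k t ^ 2)) t)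
    (hkT : k T = 0) (hR : ∀ t ∈ Ioo t₀ T, 0 ≤ R t) : ∀ t ∈ Icc t₀ T, 0 ≤ k t :=
  riccati_backward_comparison (f := 0) (f' := 0) hP hQ continuousOn_const hk
    (fun t _ => hasDerivAt_const t 0) hode (fun t ht => by simpa using hR t ht)
    (fun t _ => (neg_neg _).ge) hkT.ge

theorem riccati_le_of_bounds {A B C : ℝ} (hk : ContinuousOn k (Icc t₀ T))
    (hode : ∀ t ∈ Ioo t₀ T, HasDerivAt k (-(P t * k t + R t + Q t * k t ^ 2)) t)
    (hkT : k T = 0) (hk0 : ∀ t ∈ Ioo t₀ T, 0 ≤ k t)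
    (hPA : ∀ t ∈ Ioo t₀ T, P t ≤ A) (hRB : ∀ t ∈ Ioo t₀ T, R t ≤ B)
    (hQC : ∀ t ∈ Ioo t₀ T, Q t ≤ C) (ht₀ : 0 ≤ t₀) (hB : 0 ≤ B)
    (hABC : 4 * B * C ≤ A ^ 2) (hAT : A * T < 2) :
    ∀ t ∈ Icc t₀ T, k t ≤ B * T / (1 - A * T / 2) := by
  have hD : ∀ t ∈ Icc t₀ T, 0 < 1 - A * (T - t) / 2 := fun t ht => by
    rcases le_or_gt 0 A with hA | hA <;> nlinarith [ht.1, ht.2]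
  have hk_le := riccati_backward_comparison (p := fun _ => A) (q := fun _ => C)
    (r := fun _ => B) continuousOn_const continuousOn_const hk
    (fun t ht => (hasDerivAt_riccatiBarrier (hD t ht).ne').continuousAt.continuousWithinAt)
    hode (fun t ht => (hasDerivAt_riccatiBarrier (hD t (Ioo_subset_Icc_self ht)).ne'))
    (fun t ht => by
      have hPk := mul_le_mul_of_nonneg_right (hPA t ht) (hk0 t ht)
      have hQk := mul_le_mul_of_nonneg_right (hQC t ht) (sq_nonneg (k t))
      linarith [hRB t ht])
    (fun t ht => (riccatiBarrier_supersolution hB hABC (hD t (Ioo_subset_Icc_self ht))).trans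
      (neg_neg _).ge)
    (by simp [hkT, riccatiBarrier])
  exact fun t ht => (hk_le t ht).trans
    (riccatiBarrier_le hB hAT (hD t ht) (ht₀.trans ht.1))

theorem riccati_le_of_sq_coeff_le {Q₂ k₂ : ℝ → ℝ} (hP : ContinuousOn P (Icc t₀ T))
    (hQ₂ : ContinuousOn Q₂ (Icc t₀ T)) (hk : ContinuousOn k (Icc t₀ T))
    (hk₂ : ContinuousOn k₂ (Icc t₀ T))
    (hode : ∀ t ∈ Ioo t₀ T, HasDerivAt k (-(P t * k t + R t + Q t * k t ^ 2)) t)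
    (hode₂ : ∀ t ∈ Ioo t₀ T, HasDerivAt k₂ (-(P t * k₂ t + R t + Q₂ t * k₂ t ^ 2)) t)
    (hkT : k T = k₂ T) (hQ : ∀ t ∈ Ioo t₀ T, Q t ≤ Q₂ t) : ∀ t ∈ Icc t₀ T, k t ≤ k₂ t :=
  riccati_backward_comparison hP hQ₂ hk hk₂ hode hode₂
    (fun t ht => by
      have := mul_le_mul_of_nonneg_right (hQ t ht) (sq_nonneg (k t))
      linarith)
    (fun t _ => (neg_neg _).ge) hkT.le

theorem riccati_blowUpTime_neg {A B C : ℝ} {tb : EReal} (hP : Continuous P) (hQ : Continuous Q)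
    (htbT : tb < T) (hkT : k T = 0) (hk : ContinuousOn k {t : ℝ | tb < t ∧ t ≤ T})
    (hode : ∀ t : ℝ, tb < t → t < T → HasDerivAt k (-(P t * k t + R t + Q t * k t ^ 2)) t)
    (hblow : ⊥ < tb → Tendsto (fun t => |k t|) (𝓝[>] tb.toReal) atTop)
    (hR : ∀ t ∈ Icc 0 T, 0 ≤ R t) (hPA : ∀ t ∈ Icc 0 T, P t ≤ A)
    (hRB : ∀ t ∈ Icc 0 T, R t ≤ B) (hQC : ∀ t ∈ Icc 0 T, Q t ≤ C) (hB : 0 ≤ B)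
    (hABC : 4 * B * C ≤ A ^ 2) (hAT : A * T < 2) :
    tb < (0 : ℝ) := by
  refine lt_of_abs_le_of_tendsto_abs_atTop (M := B * T / (1 - A * T / 2)) htbT hblow
    fun t ht h0t htT => ?_
  obtain ⟨hkc, hk'⟩ := riccati_Icc_of_lt hk hode ht
  have hsub : Ioo t T ⊆ Icc 0 T := fun s hs => ⟨h0t.trans hs.1.le, hs.2.le⟩
  have hk0 :=
    riccati_nonneg hP.continuousOn hQ.continuousOn hkc hk' hkT fun s hs => hR s (hsub hs)
  rw [abs_of_nonneg (hk0 t ⟨le_rfl, htT⟩)]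
  exact riccati_le_of_bounds hkc hk' hkT (fun s hs => hk0 s (Ioo_subset_Icc_self hs))
    (fun s hs => hPA s (hsub hs)) (fun s hs => hRB s (hsub hs)) (fun s hs => hQC s (hsub hs))
    h0t hB hABC hAT t ⟨le_rfl, htT⟩

end BackwardRiccati

theorem stmt_19_general
    (T β : ℝ) (hT : 0 < T) (hβ : 0 < β)
    (H11 H13 H14 H21 H22 H33 H44 Hb22 : ℝ → ℝ)
    (hc11 : Continuous H11) (hc13 : Continuous H13)
    (hc14 : Continuous H14) (hc21 : Continuous H21) (hc22 : Continuous H22)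
    (hc33 : Continuous H33) (hc44 : Continuous H44) (hcb22 : Continuous Hb22)
    (hbound : ∀ t : ℝ, t ≤ T → β ≤ H11 t ∧ H22 t ≤ -β ∧ H33 t ≤ -β ∧
      H44 t ≤ -β ∧ Hb22 t < 0)
    (k : ℝ → ℝ → ℝ) (tb : ℝ → EReal)
    (htbT : ∀ ρ : ℝ, tb ρ < (T : EReal))
    (hterm : ∀ ρ : ℝ, k ρ T = 0)
    (hcont : ∀ ρ : ℝ, ContinuousOn (k ρ) {t : ℝ | tb ρ < (t : EReal) ∧ t ≤ T})
    (hode : ∀ ρ t : ℝ, tb ρ < (t : EReal) → t < T →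
      HasDerivAt (k ρ) (-(ricS H11 H13 H14 H21 H22 H33 H44 Hb22 ρ t (k ρ t))) t)
    (hblow : ∀ ρ : ℝ, ⊥ < tb ρ →
      Tendsto (fun t => |k ρ t|) (nhdsWithin (tb ρ).toReal (Set.Ioi (tb ρ).toReal)) atTop)
    (ρb : ℝ)
    (hH5a : 4 * sSup ((fun t => |H11 t|) '' Set.Icc (0 : ℝ) T) *
        sSup ((fun t => |H22 t - ρb * Hb22 t - H33 t * (H13 t) ^ 2 - H44 t * (H14 t) ^ 2|) ''
          Set.Icc (0 : ℝ) T)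
      ≤ (sSup ((fun t => |2 * H21 t + (H13 t) ^ 2 + (H14 t) ^ 2|) '' Set.Icc (0 : ℝ) T)) ^ 2)
    (hH5b : (sSup ((fun t => |2 * H21 t + (H13 t) ^ 2 + (H14 t) ^ 2|) '' Set.Icc (0 : ℝ) T)) ^ 2
      < 4 / T ^ 2) :
    tb ρb < ((0 : ℝ) : EReal) ∧
    ∀ ρ : ℝ, 0 < ρ → ρ ≤ ρb →
      tb ρ < ((0 : ℝ) : EReal) ∧
      ∀ t ∈ Set.Icc (0 : ℝ) T, 0 ≤ k ρ t ∧ k ρ t ≤ k ρb t := by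
  let P : ℝ → ℝ := fun t => 2 * H21 t + H13 t ^ 2 + H14 t ^ 2
  let Q : ℝ → ℝ → ℝ := fun ρ t => H22 t - ρ * Hb22 t - H33 t * H13 t ^ 2 - H44 t * H14 t ^ 2
  have hP : Continuous P := by fun_prop
  have hQ : ∀ ρ, Continuous (Q ρ) := fun ρ => by fun_prop
  set A := sSup ((fun t => |P t|) '' Icc 0 T)
  set B := sSup ((fun t => |H11 t|) '' Icc 0 T)
  set C := sSup ((fun t => |Q ρb t|) '' Icc 0 T)
  have h0T : (0 : ℝ) ∈ Icc 0 T := ⟨le_rfl, hT.le⟩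
  have hA : 0 ≤ A := (abs_nonneg _).trans (hP.abs.continuousOn.le_sSup_image_Icc h0T)
  have hB : 0 ≤ B := (abs_nonneg _).trans (hc11.abs.continuousOn.le_sSup_image_Icc h0T)
  have hAT : A * T < 2 := by
    have : A ^ 2 * T ^ 2 < 4 := (lt_div_iff₀ (by positivity)).1 hH5b
    nlinarith [mul_nonneg hA hT.le]
  have hQ_mono : ∀ ρ ≤ ρb, ∀ t ≤ T, Q ρ t ≤ Q ρb t := fun ρ hρ t ht => by
    nlinarith [mul_nonpos_of_nonneg_of_nonpos (sub_nonneg.2 hρ) (hbound t ht).2.2.2.2.le]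
  have hR : ∀ t ∈ Icc 0 T, 0 ≤ H11 t := fun t ht => hβ.le.trans (hbound t ht.2).1
  have htb : ∀ ρ ≤ ρb, tb ρ < (0 : ℝ) := fun ρ hρ =>
    riccati_blowUpTime_neg hP (hQ ρ) (htbT ρ) (hterm ρ) (hcont ρ) (hode ρ) (hblow ρ) hR
      (fun t ht => (le_abs_self _).trans (hP.abs.continuousOn.le_sSup_image_Icc ht))
      (fun t ht => (le_abs_self _).trans (hc11.abs.continuousOn.le_sSup_image_Icc ht))
      (fun t ht => (hQ_mono ρ hρ t ht.2).trans
        ((le_abs_self _).trans ((hQ ρb).abs.continuousOn.le_sSup_image_Icc ht)))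
      hB hH5a hAT
  refine ⟨htb ρb le_rfl, fun ρ _ hρ => ⟨htb ρ hρ, fun t ht => ?_⟩⟩
  obtain ⟨hk, hk'⟩ := riccati_Icc_of_lt (hcont ρ) (hode ρ) (htb ρ hρ)
  obtain ⟨hkb, hkb'⟩ := riccati_Icc_of_lt (hcont ρb) (hode ρb) (htb ρb le_rfl)
  exact ⟨riccati_nonneg hP.continuousOn (hQ ρ).continuousOn hk hk' (hterm ρ)
      (fun s hs => hR s (Ioo_subset_Icc_self hs)) t ht,
    riccati_le_of_sq_coeff_le hP.continuousOn (hQ ρb).continuousOn hk hkb hk' hkb'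
      ((hterm ρ).trans (hterm ρb).symm) (fun s hs => hQ_mono ρ hρ s hs.2.le) t ht⟩

/-- under Assumption (H5), `t^k_{ρ_b} < 0`, so `k_·(ρ_b)` exists on
all of `[0,T]`; and for each `ρ ∈ (0, ρ_b]`, `k_·(ρ)` exists on `[0,T]` with
`0 ≤ k_t(ρ) ≤ k_t(ρ_b)`. -/
theorem stmt_19
    (T β : ℝ) (hT : 0 < T) (hβ : 0 < β)
    (H11 H12 H13 H14 H21 H22 H33 H44 Hb22 : ℝ → ℝ)
    (hc11 : Continuous H11) (hc12 : Continuous H12) (hc13 : Continuous H13)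
    (hc14 : Continuous H14) (hc21 : Continuous H21) (hc22 : Continuous H22)
    (hc33 : Continuous H33) (hc44 : Continuous H44) (hcb22 : Continuous Hb22)
    (hconst : ∀ t : ℝ, t ≤ 0 → H11 t = H11 0 ∧ H12 t = H12 0 ∧ H13 t = H13 0 ∧
      H14 t = H14 0 ∧ H21 t = H21 0 ∧ H22 t = H22 0 ∧ H33 t = H33 0 ∧
      H44 t = H44 0 ∧ Hb22 t = Hb22 0)
    (hbound : ∀ t : ℝ, t ≤ T → β ≤ H11 t ∧ H22 t ≤ -β ∧ H33 t ≤ -β ∧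
      H44 t ≤ -β ∧ Hb22 t < 0)
    (k : ℝ → ℝ → ℝ) (tb : ℝ → EReal)
    (htbT : ∀ ρ : ℝ, tb ρ < (T : EReal))
    (hterm : ∀ ρ : ℝ, k ρ T = 0)
    (hcont : ∀ ρ : ℝ, ContinuousOn (k ρ) {t : ℝ | tb ρ < (t : EReal) ∧ t ≤ T})
    (hode : ∀ ρ t : ℝ, tb ρ < (t : EReal) → t < T →
      HasDerivAt (k ρ) (-(ricS H11 H13 H14 H21 H22 H33 H44 Hb22 ρ t (k ρ t))) t)
    (hblow : ∀ ρ : ℝ, ⊥ < tb ρ →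
      Tendsto (fun t => |k ρ t|) (nhdsWithin (tb ρ).toReal (Set.Ioi (tb ρ).toReal)) atTop)
    (ρb : ℝ)
    (hρb : ρb = sInf ((fun t => H22 t - H33 t * (H13 t) ^ 2 - H44 t * (H14 t) ^ 2) ''
        Set.Icc (0 : ℝ) T) / sSup (Hb22 '' Set.Icc (0 : ℝ) T))
    (hH5a : 4 * sSup ((fun t => |H11 t|) '' Set.Icc (0 : ℝ) T) *
        sSup ((fun t => |H22 t - ρb * Hb22 t - H33 t * (H13 t) ^ 2 - H44 t * (H14 t) ^ 2|) ''
          Set.Icc (0 : ℝ) T)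
      ≤ (sSup ((fun t => |2 * H21 t + (H13 t) ^ 2 + (H14 t) ^ 2|) '' Set.Icc (0 : ℝ) T)) ^ 2)
    (hH5b : (sSup ((fun t => |2 * H21 t + (H13 t) ^ 2 + (H14 t) ^ 2|) '' Set.Icc (0 : ℝ) T)) ^ 2
      < 4 / T ^ 2) :
    tb ρb < ((0 : ℝ) : EReal) ∧
    ∀ ρ : ℝ, 0 < ρ → ρ ≤ ρb →
      tb ρ < ((0 : ℝ) : EReal) ∧
      ∀ t ∈ Set.Icc (0 : ℝ) T, 0 ≤ k ρ t ∧ k ρ t ≤ k ρb t :=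
  stmt_19_general T β hT hβ H11 H13 H14 H21 H22 H33 H44 Hb22 hc11 hc13 hc14 hc21 hc22 hc33 hc44
    hcb22 hbound k tb htbT hterm hcont hode hblow ρb hH5a hH5b
end
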